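/- arXiv:1402.4912 — 7 statements merged into one kernel-verified Lean document; each statement's English description precedes it below -/
import Mathlib

section
/- Let ∂ be an additive cellular automaton of dimension n-1 over ℤ/mℤ with coefficients σ = Σ_j w_j and σ_k = Σ_j j_k w_j. Then for every natural number i, the i-th iterate of ∂ applied to the arithmetic array AA(a,d) is the arithmetic array AA(σ^i a + i σ^{i-1} Σ_{k=1}^{n-1} σ_k d_k, σ^i d). -/
/-!
Translating an arithmetic array by `j` adds the constant `∑ k, j k * d k`, so one step of the
automaton maps `AA(a, d)` to `AA(σ a + ∑ k, σ_k d_k, σ d)`. Iterating this affine recursion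
gives the closed form.
-/

open Finset

/-- The box `[-r, r]^N` of indices of the weight array. -/
noncomputable def box (r N : ℕ) : Finset (Fin N → ℤ) :=
  Fintype.piFinset fun _ : Fin N => Finset.Icc (-(r : ℤ)) (r : ℤ)

/-- The arithmetic array `AA(a, d)` with first element `a` and common difference `d`. -/
def AA (m N : ℕ) (a : ZMod m) (d : Fin N → ZMod m) : (Fin N → ℤ) → ZMod m :=
  fun i => a + ∑ k, (i k : ZMod m) * d k

/-- The additive cellular automaton of dimension `N`, radius `r` and weight array `W`. -/
noncomputable def ACA (m N r : ℕ) (W : (Fin N → ℤ) → ℤ) (A : (Fin N → ℤ) → ZMod m) :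
    (Fin N → ℤ) → ZMod m :=
  fun i => ∑ j ∈ box r N, (W j : ZMod m) * A (i + j)

/- At `i = 0` the truncated exponent `i - 1` is harmless because its coefficient `i` vanishes. -/
theorem mul_pow_add_natCast_mul_pow_pred {R : Type*} [CommSemiring R] (s a b : R) (i : ℕ) :
    s * (s ^ i * a + i * s ^ (i - 1) * b) + s ^ i * b =
      s ^ (i + 1) * a + ((i + 1 : ℕ) : R) * s ^ (i + 1 - 1) * b := by
  cases i with
  | zero => simp
  | succ i => push_cast; ring

section ArithmeticArray

variable {m N : ℕ}

theorem AA_apply_add (a : ZMod m) (d : Fin N → ZMod m) (x j : Fin N → ℤ) :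
    AA m N a d (x + j) = AA m N a d x + ∑ k, (j k : ZMod m) * d k := by
  simp only [AA, Pi.add_apply, Int.cast_add, add_mul, sum_add_distrib, add_assoc]

theorem mul_AA_apply_add (c b a : ZMod m) (d : Fin N → ZMod m) (x : Fin N → ℤ) :
    c * AA m N a d x + b = AA m N (c * a + b) (fun k => c * d k) x := by
  simp only [AA, mul_add, mul_sum, mul_left_comm c]
  ring

theorem ACA_AA (r : ℕ) (W : (Fin N → ℤ) → ℤ) (a : ZMod m) (d : Fin N → ZMod m) :
    ACA m N r W (AA m N a d) =
      AA m N (((∑ j ∈ box r N, W j : ℤ) : ZMod m) * a +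
        ∑ k, ((∑ j ∈ box r N, j k * W j : ℤ) : ZMod m) * d k)
        (fun k => ((∑ j ∈ box r N, W j : ℤ) : ZMod m) * d k) := by
  funext x
  rw [← mul_AA_apply_add]
  simp only [ACA, AA_apply_add, mul_add, sum_add_distrib, Int.cast_sum, Int.cast_mul, sum_mul,
    mul_sum]
  rw [sum_comm]
  simp only [mul_assoc, mul_left_comm (W _ : ZMod m)]

end ArithmeticArray

/-- The `i`-th iterate of the ACA applied to the arithmetic array `AA(a,d)` is the
arithmetic array `AA(σ^i a + i σ^(i-1) ∑ σ_k d_k, σ^i d)`. -/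
theorem stmt5 (m N r : ℕ) (W : (Fin N → ℤ) → ℤ) (a : ZMod m) (d : Fin N → ZMod m)
    (i : ℕ) :
    (ACA m N r W)^[i] (AA m N a d) =
      AA m N
        (((∑ j ∈ box r N, W j : ℤ) : ZMod m) ^ i * a +
          (i : ZMod m) * ((∑ j ∈ box r N, W j : ℤ) : ZMod m) ^ (i - 1) *
            ∑ k, ((∑ j ∈ box r N, j k * W j : ℤ) : ZMod m) * d k)
        (fun k => ((∑ j ∈ box r N, W j : ℤ) : ZMod m) ^ i * d k) := by
  set σ : ZMod m := ((∑ j ∈ box r N, W j : ℤ) : ZMod m)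
  set σd : ZMod m := ∑ k, ((∑ j ∈ box r N, j k * W j : ℤ) : ZMod m) * d k
  induction i with
  | zero => simp
  | succ i ih =>
    have hσd : ∑ k, ((∑ j ∈ box r N, j k * W j : ℤ) : ZMod m) * (σ ^ i * d k) = σ ^ i * σd := by
      simp only [σd, mul_sum, mul_left_comm (σ ^ i)]
    rw [Function.iterate_succ_apply', ih, ACA_AA, hσd, mul_pow_add_natCast_mul_pow_pred]
    simp only [σ, pow_succ', mul_assoc, Nat.add_sub_cancel]
end

section
/- Let n ≥ 2, let Δ = AS(a, d, s) be an arithmetic n-simplex over ℤ/mℤ, and set d_0 = 0. Then for all x ∈ ℤ/mℤ and all distinct i, j ∈ {0,...,n}, the multiplicity functions satisfy m_Δ(x + d_j) − m_Δ(x + d_i) = m_{F_j(Δ)}(x + d_j) − m_{F_i(Δ)}(x + d_i), where F_k(Δ) denotes the k-th facet of Δ. -/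
open Finset

/-- Index set of an `n`-simplex of size `s`: all `i : Fin n → ℕ` with `∑ k, i k ≤ s - 1`,
i.e. `∑ k, i k < s`. -/
def simplexIdx (n s : ℕ) : Finset (Fin n → ℕ) :=
  (Fintype.piFinset fun _ : Fin n => Finset.range s).filter fun i => ∑ k, i k < s

/-- The arithmetic `n`-simplex `AS(a, d, s)` as a multiset of `ZMod m`. -/
def AS (m n : ℕ) (a : ZMod m) (d : Fin n → ZMod m) (s : ℕ) : Multiset (ZMod m) :=
  (simplexIdx n s).val.map fun i => a + ∑ k, (i k : ZMod m) * d k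

/-- A finite multiset of `ZMod m` is balanced if every element of `ZMod m` occurs with the
same multiplicity. -/
def IsBalanced {m : ℕ} (M : Multiset (ZMod m)) : Prop :=
  ∀ x y : ZMod m, M.count x = M.count y

/-- The facet `F_0(Δ)`: the submultiset of `AS(a,d,s)` of entries with `i_1 + ⋯ + i_n = s - 1`. -/
def facetZero (m n : ℕ) (a : ZMod m) (d : Fin n → ZMod m) (s : ℕ) : Multiset (ZMod m) :=
  (((Fintype.piFinset fun _ : Fin n => Finset.range s).filter
      fun i => ∑ k, i k = s - 1).val).map fun i => a + ∑ k, (i k : ZMod m) * d k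

/-- The facet `F_k(Δ)` for `k ∈ [1,n]`: the submultiset of entries with `i_k = 0`. -/
def facetPos (m n : ℕ) (a : ZMod m) (d : Fin n → ZMod m) (s : ℕ) (k : Fin n) :
    Multiset (ZMod m) :=
  ((simplexIdx n s).filter fun i => i k = 0).val.map fun i => a + ∑ k, (i k : ZMod m) * d k

/-- The facets `F_0, F_1, …, F_n` of the arithmetic simplex `AS(a,d,s)`. -/
def facet (m n : ℕ) (a : ZMod m) (d : Fin n → ZMod m) (s : ℕ) : Fin (n + 1) → Multiset (ZMod m) :=
  fun k => if h : k = 0 then facetZero m n a d s else facetPos m n a d s (k.pred h)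

section Aux

variable {m n s : ℕ} {a : ZMod m} {d : Fin n → ZMod m}

lemma count_AS (y : ZMod m) :
    (AS m n a d s).count y =
      ((simplexIdx n s).filter fun i => y = a + ∑ k, (i k : ZMod m) * d k).card := by
  rw [AS, Multiset.count_map]; rfl

lemma count_facetZero (y : ZMod m) :
    (facetZero m n a d s).count y =
      ((((Fintype.piFinset fun _ : Fin n => Finset.range s).filter
        fun i => ∑ k, i k = s - 1)).filter fun i => y = a + ∑ k, (i k : ZMod m) * d k).card := by
  rw [facetZero, Multiset.count_map]; rfl

lemma count_facetPos (k : Fin n) (y : ZMod m) :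
    (facetPos m n a d s k).count y =
      (((simplexIdx n s).filter fun i => i k = 0).filter
        fun i => y = a + ∑ k, (i k : ZMod m) * d k).card := by
  rw [facetPos, Multiset.count_map]; rfl

lemma sum_split {β} [AddCommMonoid β] (g : Fin n → β) (k : Fin n) :
    ∑ l, g l = g k + ∑ l ∈ Finset.univ.erase k, g l :=
  (Finset.add_sum_erase _ _ (Finset.mem_univ k)).symm

lemma sum_update_split {β} [AddCommMonoid β] (g : Fin n → ℕ → β) (i : Fin n → ℕ)
    (k : Fin n) (v : ℕ) :
    ∑ l, g l (Function.update i k v l) = g k v + ∑ l ∈ Finset.univ.erase k, g l (i l) := by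
  rw [sum_split (fun l => g l (Function.update i k v l)) k, Function.update_self]
  congr 1
  refine Finset.sum_congr rfl fun l hl => ?_
  rw [Function.update_of_ne (Finset.mem_erase.1 hl).1]

lemma case0 (hs : 0 < s) (y : ZMod m) :
    ((simplexIdx n s).filter fun i => y = a + ∑ k, (i k : ZMod m) * d k).card =
    (((Fintype.piFinset fun _ : Fin n => Finset.range s).filter
        fun i => ∑ k, i k = s - 1).filter fun i => y = a + ∑ k, (i k : ZMod m) * d k).card
    + ((simplexIdx n (s - 1)).filter fun i => y = a + ∑ k, (i k : ZMod m) * d k).card := by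
  have hsplit : simplexIdx n s =
      ((Fintype.piFinset fun _ : Fin n => Finset.range s).filter
        fun i => ∑ k, i k = s - 1) ∪ simplexIdx n (s - 1) := by
    ext i
    simp only [simplexIdx, mem_filter, mem_union, Fintype.mem_piFinset, mem_range]
    constructor
    · rintro ⟨h1, h2⟩
      by_cases h : ∑ k, i k = s - 1
      · exact Or.inl ⟨h1, h⟩
      · refine Or.inr ⟨fun k => ?_, by omega⟩
        have := Finset.single_le_sum (f := i) (fun _ _ => Nat.zero_le _) (Finset.mem_univ k)
        omega
    · rintro (⟨h1, h2⟩ | ⟨h1, h2⟩)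
      · exact ⟨h1, by omega⟩
      · exact ⟨fun k => by have := h1 k; omega, by omega⟩
  have hdisj : Disjoint
      ((Fintype.piFinset fun _ : Fin n => Finset.range s).filter fun i => ∑ k, i k = s - 1)
      (simplexIdx n (s - 1)) := by
    rw [Finset.disjoint_left]
    intro i hi hi'
    simp only [simplexIdx, mem_filter] at hi hi'
    omega
  rw [hsplit, filter_union,
    card_union_of_disjoint (Finset.disjoint_filter_filter hdisj)]

lemma caseSucc (hs : 0 < s) (k : Fin n) (x : ZMod m) :
    ((simplexIdx n s).filter fun i => x + d k = a + ∑ l, (i l : ZMod m) * d l).card =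
    (((simplexIdx n s).filter fun i => i k = 0).filter
        fun i => x + d k = a + ∑ l, (i l : ZMod m) * d l).card
    + ((simplexIdx n (s - 1)).filter fun i => x = a + ∑ l, (i l : ZMod m) * d l).card := by
  classical
  set P : (Fin n → ℕ) → Prop := fun i => x + d k = a + ∑ l, (i l : ZMod m) * d l with hP
  have hbij :
      (((simplexIdx n s).filter P).filter fun i => ¬ i k = 0).card =
      ((simplexIdx n (s - 1)).filter fun i => x = a + ∑ l, (i l : ZMod m) * d l).card := by
    apply Finset.card_bij (fun i _ => Function.update i k (i k - 1))
    · intro i hi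
      simp only [mem_filter, simplexIdx, Fintype.mem_piFinset, mem_range, hP] at hi ⊢
      obtain ⟨⟨⟨hcomp, hsum⟩, hval⟩, hk0⟩ := hi
      have hke : i k + ∑ l ∈ Finset.univ.erase k, i l = ∑ l, i l :=
        Finset.add_sum_erase _ _ (Finset.mem_univ k)
      have hle : ∀ l, l ≠ k → i l ≤ ∑ l' ∈ Finset.univ.erase k, i l' := fun l hl =>
        Finset.single_le_sum (f := i) (fun _ _ => Nat.zero_le _)
          (Finset.mem_erase.2 ⟨hl, Finset.mem_univ l⟩)
      refine ⟨⟨fun l => ?_, ?_⟩, ?_⟩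
      · by_cases h : l = k
        · subst h; rw [Function.update_self]; omega
        · rw [Function.update_of_ne h]; have := hle l h; omega
      · rw [sum_update_split (fun _ v => v)]
        omega
      · rw [sum_update_split (fun l v => (v : ZMod m) * d l)]
        rw [sum_split (fun l => (i l : ZMod m) * d l) k] at hval
        have hcast : ((i k - 1 : ℕ) : ZMod m) = (i k : ZMod m) - 1 := by
          have : 1 ≤ i k := by omega
          push_cast [Nat.cast_sub this]; ring
        rw [hcast]
        linear_combination hval
    · intro i₁ h₁ i₂ h₂ h
      simp only [mem_filter] at h₁ h₂
      funext l
      have hl := congrFun h l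
      by_cases hc : l = k
      · subst hc
        rw [Function.update_self, Function.update_self] at hl
        have e₁ : i₁ l ≠ 0 := h₁.2
        have e₂ : i₂ l ≠ 0 := h₂.2
        omega
      · rwa [Function.update_of_ne hc, Function.update_of_ne hc] at hl
    · intro j hj
      simp only [mem_filter, simplexIdx, Fintype.mem_piFinset, mem_range, hP] at hj
      obtain ⟨⟨hcomp, hsum⟩, hval⟩ := hj
      refine ⟨Function.update j k (j k + 1), ?_, ?_⟩
      · simp only [mem_filter, simplexIdx, Fintype.mem_piFinset, mem_range, hP,
          Function.update_self]
        have hke : j k + ∑ l ∈ Finset.univ.erase k, j l = ∑ l, j l :=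
          Finset.add_sum_erase _ _ (Finset.mem_univ k)
        refine ⟨⟨⟨fun l => ?_, ?_⟩, ?_⟩, by omega⟩
        · by_cases h : l = k
          · subst h; rw [Function.update_self]; have := hcomp l; omega
          · rw [Function.update_of_ne h]; have := hcomp l; omega
        · rw [sum_update_split (fun _ v => v)]
          omega
        · rw [sum_update_split (fun l v => (v : ZMod m) * d l)]
          rw [sum_split (fun l => (j l : ZMod m) * d l) k] at hval
          push_cast
          linear_combination hval
      · funext l
        by_cases h : l = k
        · subst h
          rw [Function.update_self, Function.update_self]
          simp
        · rw [Function.update_of_ne h, Function.update_of_ne h]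
  calc ((simplexIdx n s).filter P).card
      = (((simplexIdx n s).filter P).filter fun i => i k = 0).card
        + (((simplexIdx n s).filter P).filter fun i => ¬ i k = 0).card :=
        (Finset.card_filter_add_card_filter_not _).symm
    _ = _ := by rw [Finset.filter_comm, hbij]

lemma main_count (hs : 0 < s) (D : Fin (n + 1) → ZMod m) (hD : D = Fin.cases 0 d)
    (x : ZMod m) (k : Fin (n + 1)) :
    (AS m n a d s).count (x + D k) =
      (facet m n a d s k).count (x + D k) + (AS m n a d (s - 1)).count x := by
  subst hD
  induction k using Fin.cases with
  | zero =>
    have hf : facet m n a d s 0 = facetZero m n a d s := by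
      rw [facet]; simp
    simp only [Fin.cases_zero, add_zero, hf]
    rw [count_AS, count_AS, count_facetZero]
    exact case0 hs x
  | succ l =>
    have hf : facet m n a d s l.succ = facetPos m n a d s l := by
      rw [facet]; rw [dif_neg (Fin.succ_ne_zero l)]
      simp
    simp only [Fin.cases_succ, hf]
    rw [count_AS, count_AS, count_facetPos]
    exact caseSucc hs l x

end Aux

/-- Key lemma: with `d_0 = 0`, for distinct `i, j ∈ [0,n]`,
`m_Δ(x+d_j) − m_Δ(x+d_i) = m_{F_j(Δ)}(x+d_j) − m_{F_i(Δ)}(x+d_i)`. -/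
theorem stmt7 (m n s : ℕ) (hn : 2 ≤ n) (hs : 0 < s) (a : ZMod m) (d : Fin n → ZMod m)
    (D : Fin (n + 1) → ZMod m) (hD : D = Fin.cases 0 d)
    (x : ZMod m) (i j : Fin (n + 1)) (hij : i ≠ j) :
    ((AS m n a d s).count (x + D j) : ℤ) - (AS m n a d s).count (x + D i) =
      ((facet m n a d s j).count (x + D j) : ℤ) - (facet m n a d s i).count (x + D i) := by
  rw [main_count hs D hD x i, main_count hs D hD x j]
  push_cast
  ring
end

section
/- Let n and m be positive integers with gcd(m, n!) = 1. Let a ∈ ℤ/mℤ and d = (d_1,...,d_n) ∈ (ℤ/mℤ)^n such that each d_i (1 ≤ i ≤ n) and each difference d_j − d_i (1 ≤ i < j ≤ n) is invertible in ℤ/mℤ. Then the arithmetic simplex AS(a, d, s) is a balanced multiset of ℤ/mℤ for every positive integer s with s ≡ −t (mod m), t ∈ {0,...,n−1}. -/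
open Finset

section Auxiliary

open Polynomial
set_option linter.unusedSectionVars false


private lemma prod_erase_zero {M : Type*} [CommMonoid M] {n : ℕ} (g : Fin (n + 1) → M) :
    ∏ j ∈ (univ : Finset (Fin (n + 1))).erase 0, g j = ∏ k : Fin n, g k.succ := by
  rw [Fin.univ_succ, Finset.erase_cons, Finset.prod_map]
  rfl

private lemma prod_erase_succ {M : Type*} [CommMonoid M] {n : ℕ} (g : Fin (n + 2) → M)
    (k : Fin (n + 1)) :
    ∏ j ∈ (univ : Finset (Fin (n + 2))).erase k.succ, g j
      = g 0 * ∏ j ∈ (univ : Finset (Fin (n + 1))).erase k, g j.succ := by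
  rw [Fin.univ_succ, Finset.erase_cons_of_ne _ (Fin.succ_ne_zero k).symm, Finset.prod_cons]
  congr 1
  rw [show (k.succ : Fin (n+2)) = (⟨Fin.succ, Fin.succ_injective _⟩ : Fin (n+1) ↪ Fin (n+2)) k from rfl,
    ← Finset.map_erase, Finset.prod_map]
  rfl

private lemma lagrange_vanish {n : ℕ} (w : Fin (n + 2) → ℂ) (hw : Function.Injective w)
    (r : ℕ) (hr : r ≤ n) :
    ∑ k, w k ^ r * (∏ j ∈ univ.erase k, (w k - w j))⁻¹ = 0 := by
  have hinj : Set.InjOn w (univ : Finset (Fin (n + 2))) := hw.injOn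
  have hcard : #(univ : Finset (Fin (n + 2))) = n + 2 := by simp
  have hdeg : (X ^ r : ℂ[X]).degree < #(univ : Finset (Fin (n + 2))) := by
    rw [degree_X_pow, hcard]
    exact_mod_cast by omega
  have h := Lagrange.eq_interpolate hinj hdeg
  have hb : ∀ i : Fin (n + 2),
      (Lagrange.basis univ w i).coeff (n + 1) = ∏ j ∈ univ.erase i, (w i - w j)⁻¹ := by
    intro i
    have hP : (∏ j ∈ univ.erase i, (X - C (w j)) : ℂ[X]).Monic :=
      monic_prod_of_monic _ _ fun j _ => monic_X_sub_C (w j)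
    have hdegP : (∏ j ∈ univ.erase i, (X - C (w j)) : ℂ[X]).natDegree = n + 1 := by
      rw [natDegree_prod_of_monic _ _ fun j _ => monic_X_sub_C (w j)]
      simp [Finset.card_erase_of_mem]
    have : Lagrange.basis univ w i
        = C (∏ j ∈ univ.erase i, (w i - w j)⁻¹) * ∏ j ∈ univ.erase i, (X - C (w j)) := by
      rw [Lagrange.basis, map_prod, ← Finset.prod_mul_distrib]
      rfl
    rw [this, coeff_C_mul, ← hdegP, hP.coeff_natDegree, mul_one]
  have hcoeff := congrArg (fun p : ℂ[X] => p.coeff (n + 1)) h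
  simp only [Lagrange.interpolate_apply, finset_sum_coeff, coeff_C_mul, coeff_X_pow, eval_pow,
    eval_X, hb] at hcoeff
  rw [if_neg (by omega)] at hcoeff
  rw [show ∑ k : Fin (n + 2), w k ^ r * (∏ j ∈ univ.erase k, (w k - w j))⁻¹
      = ∑ k : Fin (n + 2), w k ^ r * ∏ j ∈ univ.erase k, (w k - w j)⁻¹ from
    Finset.sum_congr rfl fun k _ => by rw [Finset.prod_inv_distrib]]
  exact hcoeff.symm

private lemma sum_adt_succ {M : Type*} [AddCommMonoid M] {k N : ℕ}
    (F : (Fin (k + 1) → ℕ) → M) :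
    ∑ i ∈ Finset.Nat.antidiagonalTuple (k + 1) N, F i
      = ∑ j ∈ range (N + 1), ∑ t ∈ Finset.Nat.antidiagonalTuple k (N - j), F (Fin.cons j t) := by
  have h2 : ∑ p ∈ (range (N + 1)).sigma (fun j => Finset.Nat.antidiagonalTuple k (N - j)),
      F (Fin.cons p.1 p.2) = ∑ j ∈ range (N + 1), ∑ t ∈ Finset.Nat.antidiagonalTuple k (N - j),
      F (Fin.cons j t) := Finset.sum_sigma _ _ _
  rw [← h2]
  refine Finset.sum_nbij' (fun i => ⟨i 0, Fin.tail i⟩) (fun p => Fin.cons p.1 p.2) ?_ ?_ ?_ ?_ ?_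
  · intro i hi
    rw [Finset.Nat.mem_antidiagonalTuple, Fin.sum_univ_succ] at hi
    simp only [Finset.mem_sigma, Finset.mem_range, Finset.Nat.mem_antidiagonalTuple, Fin.tail]
    omega
  · intro p hp
    rw [Finset.mem_sigma, Finset.mem_range, Finset.Nat.mem_antidiagonalTuple] at hp
    rw [Finset.Nat.mem_antidiagonalTuple, Fin.sum_univ_succ]
    rw [Fin.cons_zero]
    simp only [Fin.cons_succ]
    omega
  · intro i _; exact Fin.cons_self_tail i
  · intro p _
    simp
  · intro i _
    dsimp only
    rw [Fin.cons_self_tail]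

private lemma hsum_eq : ∀ {n : ℕ} (w : Fin (n + 1) → ℂ), Function.Injective w → ∀ N : ℕ,
    ∑ i ∈ Finset.Nat.antidiagonalTuple (n + 1) N, ∏ k, w k ^ i k
      = ∑ k, w k ^ (N + n) * (∏ j ∈ univ.erase k, (w k - w j))⁻¹ := by
  intro n
  induction n with
  | zero =>
    intro w _ N
    simp [Finset.Nat.antidiagonalTuple_one]
  | succ n IH =>
    intro w hw N
    have hw'inj : Function.Injective (fun k : Fin (n + 1) => w k.succ) :=
      fun a b h => Fin.succ_injective _ (hw h)
    have hne : ∀ k : Fin (n + 1), w k.succ - w 0 ≠ 0 := fun k =>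
      sub_ne_zero.mpr fun h => Fin.succ_ne_zero k (hw h)
    have hne' : ∀ k : Fin (n + 1), w 0 - w k.succ ≠ 0 := fun k =>
      sub_ne_zero.mpr (Ne.symm (sub_ne_zero.mp (hne k)))
    have hQ : ∀ k : Fin (n + 1), (∏ j ∈ univ.erase k, (w k.succ - w j.succ)) ≠ 0 := by
      intro k
      rw [Finset.prod_ne_zero_iff]
      intro j hj
      exact sub_ne_zero.mpr fun h => (Finset.mem_erase.mp hj).1 (hw'inj h).symm
    have hsucc_prod : ∀ k : Fin (n + 1),
        (∏ j ∈ (univ : Finset (Fin (n + 2))).erase k.succ, (w k.succ - w j))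
          = (w k.succ - w 0) * ∏ j ∈ univ.erase k, (w k.succ - w j.succ) :=
      fun k => prod_erase_succ _ k
    have hvan := lagrange_vanish w hw n le_rfl
    rw [Fin.sum_univ_succ, prod_erase_zero] at hvan
    simp only [hsucc_prod] at hvan
    have hterm : ∀ j ∈ range (N + 1),
        ∑ t ∈ Finset.Nat.antidiagonalTuple (n + 1) (N - j), ∏ k, w k ^ (Fin.cons j t k)
          = ∑ k : Fin (n + 1), (w 0 ^ j * w k.succ ^ (N - j)) *
              (w k.succ ^ n * (∏ j' ∈ univ.erase k, (w k.succ - w j'.succ))⁻¹) := by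
      intro j hj
      have h1 : ∀ t ∈ Finset.Nat.antidiagonalTuple (n + 1) (N - j),
          ∏ k, w k ^ (Fin.cons j t k) = w 0 ^ j * ∏ k : Fin (n + 1), w k.succ ^ t k := by
        intro t _
        rw [Fin.prod_univ_succ, Fin.cons_zero]
        simp only [Fin.cons_succ]
      rw [Finset.sum_congr rfl h1, ← Finset.mul_sum, IH _ hw'inj (N - j), Finset.mul_sum]
      refine Finset.sum_congr rfl fun k _ => ?_
      rw [pow_add]
      ring
    have geo : ∀ k : Fin (n + 1), ∑ j ∈ range (N + 1), w 0 ^ j * w k.succ ^ (N - j)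
        = (w 0 ^ (N + 1) - w k.succ ^ (N + 1)) * (w 0 - w k.succ)⁻¹ := by
      intro k
      have h2 := geom_sum₂_mul (w 0) (w k.succ) (N + 1)
      simp only [Nat.add_sub_cancel] at h2
      rw [eq_mul_inv_iff_mul_eq₀ (hne' k), ← h2]
    have L1 : ∑ i ∈ Finset.Nat.antidiagonalTuple (n + 1 + 1) N, ∏ k, w k ^ i k
        = ∑ k : Fin (n + 1), ((w 0 ^ (N + 1) - w k.succ ^ (N + 1)) * (w 0 - w k.succ)⁻¹) *
            (w k.succ ^ n * (∏ j' ∈ univ.erase k, (w k.succ - w j'.succ))⁻¹) := by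
      rw [sum_adt_succ, Finset.sum_congr rfl hterm, Finset.sum_comm]
      exact Finset.sum_congr rfl fun k _ => by rw [← Finset.sum_mul, geo k]
    have R1 : (∑ k : Fin (n + 2), w k ^ (N + (n + 1)) * (∏ j ∈ univ.erase k, (w k - w j))⁻¹)
        = w 0 ^ (N + (n + 1)) * (∏ k : Fin (n + 1), (w 0 - w k.succ))⁻¹
          + ∑ k : Fin (n + 1), w k.succ ^ (N + (n + 1)) *
              ((w k.succ - w 0) * ∏ j ∈ univ.erase k, (w k.succ - w j.succ))⁻¹ := by
      rw [Fin.sum_univ_succ, prod_erase_zero]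
      congr 1
      exact Finset.sum_congr rfl fun k _ => by rw [hsucc_prod k]
    rw [L1, R1]
    refine eq_add_of_sub_eq ?_
    rw [← Finset.sum_sub_distrib]
    have per : ∀ k ∈ (univ : Finset (Fin (n + 1))),
        ((w 0 ^ (N + 1) - w k.succ ^ (N + 1)) * (w 0 - w k.succ)⁻¹) *
            (w k.succ ^ n * (∏ j' ∈ univ.erase k, (w k.succ - w j'.succ))⁻¹)
          - w k.succ ^ (N + (n + 1)) *
              ((w k.succ - w 0) * ∏ j ∈ univ.erase k, (w k.succ - w j.succ))⁻¹
        = (- w 0 ^ (N + 1)) * (w k.succ ^ n *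
            ((w k.succ - w 0) * ∏ j ∈ univ.erase k, (w k.succ - w j.succ))⁻¹) := by
      intro k _
      have h3 := hne k
      have h3' := hne' k
      have h4 := hQ k
      field_simp
      ring
    rw [Finset.sum_congr rfl per, ← Finset.mul_sum]
    have hS : ∑ k : Fin (n + 1), w k.succ ^ n *
          ((w k.succ - w 0) * ∏ j ∈ univ.erase k, (w k.succ - w j.succ))⁻¹
        = - (w 0 ^ n * (∏ k : Fin (n + 1), (w 0 - w k.succ))⁻¹) := by
      linear_combination hvan
    rw [hS]
    ring

noncomputable section

private def ζm (m : ℕ) : ℂ := Complex.exp (2 * Real.pi * Complex.I / m)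

private def Ech (m : ℕ) (x : ZMod m) : ℂ := ζm m ^ x.val

variable {m : ℕ} [NeZero m]

private lemma hprim : IsPrimitiveRoot (ζm m) m :=
  Complex.isPrimitiveRoot_exp m (NeZero.ne m)

private lemma ζm_pow_m : ζm m ^ m = 1 := hprim.pow_eq_one

private lemma ζm_pow_mod (j : ℕ) : ζm m ^ (j % m) = ζm m ^ j := by
  conv_rhs => rw [← Nat.div_add_mod j m]
  rw [pow_add, pow_mul, ζm_pow_m, one_pow, one_mul]

private lemma Ech_natCast (j : ℕ) : Ech m (j : ZMod m) = ζm m ^ j := by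
  rw [Ech, ZMod.val_natCast, ζm_pow_mod]

private lemma Ech_add (x y : ZMod m) : Ech m (x + y) = Ech m x * Ech m y := by
  have h : ((x.val + y.val : ℕ) : ZMod m) = x + y := by
    push_cast
    rw [ZMod.natCast_rightInverse x, ZMod.natCast_rightInverse y]
  rw [← h, Ech_natCast, pow_add, Ech, Ech]

private lemma Ech_zero : Ech m (0 : ZMod m) = 1 := by
  rw [Ech, ZMod.val_zero, pow_zero]

private lemma Ech_sum {ι : Type*} (s : Finset ι) (g : ι → ZMod m) :
    Ech m (∑ k ∈ s, g k) = ∏ k ∈ s, Ech m (g k) := by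
  induction s using Finset.cons_induction with
  | empty => simp [Ech_zero]
  | cons a s ha ih => rw [Finset.sum_cons, Finset.prod_cons, Ech_add, ih]

private lemma Ech_natmul (j : ℕ) (x : ZMod m) :
    Ech m ((j : ZMod m) * x) = Ech m x ^ j := by
  induction j with
  | zero => simp [Ech_zero]
  | succ j ih =>
    push_cast
    rw [add_mul, one_mul, Ech_add, ih, pow_succ]

private lemma Ech_pow_m (x : ZMod m) : Ech m x ^ m = 1 := by
  rw [Ech, ← pow_mul, mul_comm, pow_mul, ζm_pow_m, one_pow]

private lemma Ech_eq_one_iff (x : ZMod m) : Ech m x = 1 ↔ x = 0 := by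
  rw [Ech, hprim.pow_eq_one_iff_dvd]
  constructor
  · intro h
    exact (ZMod.val_eq_zero x).mp (Nat.eq_zero_of_dvd_of_lt h x.val_lt)
  · rintro rfl; simp [ZMod.val_zero]

private lemma Ech_ne_zero (x : ZMod m) : Ech m x ≠ 0 :=
  pow_ne_zero _ (Complex.exp_ne_zero _)

private lemma Ech_orth {z : ZMod m} (hz : z ≠ 0) :
    ∑ b : ZMod m, Ech m (b * z) = 0 := by
  have hterm : ∀ b : ZMod m, Ech m (b * z) = (ζm m ^ z.val) ^ b.val := by
    intro b
    rw [Ech, ZMod.val_mul, ζm_pow_mod, mul_comm b.val, pow_mul]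
  rw [Finset.sum_congr rfl fun b _ => hterm b]
  have hre : ∑ b : ZMod m, (ζm m ^ z.val) ^ b.val = ∑ j ∈ range m, (ζm m ^ z.val) ^ j := by
    refine Finset.sum_nbij' (fun b => b.val) (fun j => (j : ZMod m)) ?_ ?_ ?_ ?_ ?_
    · intro b _; exact Finset.mem_range.mpr b.val_lt
    · intro j _; exact Finset.mem_univ _
    · intro b _; exact ZMod.natCast_rightInverse b
    · intro j hj; exact ZMod.val_cast_of_lt (Finset.mem_range.mp hj)
    · intro b _; rfl
  rw [hre]
  have hx1 : ζm m ^ z.val ≠ 1 := by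
    intro h
    rw [hprim.pow_eq_one_iff_dvd] at h
    exact hz ((ZMod.val_eq_zero z).mp (Nat.eq_zero_of_dvd_of_lt h z.val_lt))
  rw [geom_sum_eq hx1, ← pow_mul, mul_comm, pow_mul, ζm_pow_m, one_pow, sub_self, zero_div]

end

private lemma simplex_sum_eq {n s : ℕ} (hs : 0 < s) (v : Fin n → ℂ) :
    ∑ i ∈ simplexIdx n s, ∏ k, v k ^ i k
      = ∑ i ∈ Finset.Nat.antidiagonalTuple (n + 1) (s - 1), ∏ k, (Fin.cons 1 v) k ^ i k := by
  refine Finset.sum_nbij' (fun i => Fin.cons (s - 1 - ∑ k, i k) i)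
    (fun i' => Fin.tail i') ?_ ?_ ?_ ?_ ?_
  · intro i hi
    rw [simplexIdx, Finset.mem_filter] at hi
    obtain ⟨-, hi2⟩ := hi
    rw [Finset.Nat.mem_antidiagonalTuple, Fin.sum_univ_succ, Fin.cons_zero]
    simp only [Fin.cons_succ]
    omega
  · intro i' hi'
    rw [Finset.Nat.mem_antidiagonalTuple, Fin.sum_univ_succ] at hi'
    rw [simplexIdx, Finset.mem_filter]
    constructor
    · rw [Fintype.mem_piFinset]
      intro k
      rw [Finset.mem_range]
      have h1 : i' k.succ ≤ ∑ j : Fin n, i' j.succ :=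
        Finset.single_le_sum (f := fun j : Fin n => i' j.succ)
          (fun _ _ => Nat.zero_le _) (Finset.mem_univ k)
      show Fin.tail i' k < s
      simp only [Fin.tail]
      omega
    · show ∑ k, Fin.tail i' k < s
      simp only [Fin.tail]
      omega
  · intro i _; exact Fin.tail_cons _ _
  · intro i' hi'
    rw [Finset.Nat.mem_antidiagonalTuple, Fin.sum_univ_succ] at hi'
    have h0 : s - 1 - ∑ k, Fin.tail i' k = i' 0 := by
      simp only [Fin.tail]; omega
    rw [h0, Fin.cons_self_tail]
  · intro i _
    conv_rhs => rw [Fin.prod_univ_succ]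
    simp only [Fin.cons_zero, Fin.cons_succ, one_pow, one_mul]

end Auxiliary

/-- If `gcd(m, n!) = 1`, all `d_i` and all differences `d_j - d_i` (`i < j`) are invertible,
then the arithmetic simplex `AS(a, d, s)` is balanced for all `s ≡ -t (mod m)`, `t ∈ [0, n-1]`. -/
theorem stmt8 (n m : ℕ) (hn : 0 < n) (hm : 0 < m)
    (hgcd : Nat.gcd m n.factorial = 1)
    (a : ZMod m) (d : Fin n → ZMod m)
    (hd : ∀ i, IsUnit (d i))
    (hdiff : ∀ i j : Fin n, i < j → IsUnit (d j - d i))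
    (s : ℕ) (hs : 0 < s) (ht : ∃ t < n, (s : ZMod m) = -(t : ZMod m)) :
    IsBalanced (AS m n a d s) := by
  classical
  obtain ⟨t, htn, hst⟩ := ht
  intro x y
  rcases eq_or_ne m 1 with rfl | hm1'
  · rw [Subsingleton.elim x y]
  haveI : NeZero m := ⟨by omega⟩
  obtain ⟨n, rfl⟩ : ∃ n', n = n' + 1 := ⟨n - 1, by omega⟩
  have hf : ∀ z : ZMod m, (AS m (n + 1) a d s).count z
      = #((simplexIdx (n + 1) s).filter
          fun i => z = a + ∑ k, (i k : ZMod m) * d k) := by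
    intro z
    rw [AS, Multiset.count_map, Finset.card_def, Finset.filter_val]
  rw [hf x, hf y]
  have key : ∀ z : ZMod m,
      (#((simplexIdx (n + 1) s).filter
          fun i => z = a + ∑ k, (i k : ZMod m) * d k) : ℂ) * m
        = (#(simplexIdx (n + 1) s) : ℂ) := by
    intro z
    have stepA : ∑ i ∈ simplexIdx (n + 1) s,
        ∑ b : ZMod m, Ech m (b * ((a + ∑ k, (i k : ZMod m) * d k) - z))
          = (#((simplexIdx (n + 1) s).filter
              fun i => z = a + ∑ k, (i k : ZMod m) * d k) : ℂ) * m := by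
      have inner : ∀ i ∈ simplexIdx (n + 1) s,
          ∑ b : ZMod m, Ech m (b * ((a + ∑ k, (i k : ZMod m) * d k) - z))
            = if z = a + ∑ k, (i k : ZMod m) * d k then (m : ℂ) else 0 := by
        intro i _
        by_cases h : z = a + ∑ k, (i k : ZMod m) * d k
        · rw [if_pos h, ← h, sub_self]
          simp only [mul_zero, Ech_zero]
          rw [Finset.sum_const, Finset.card_univ, ZMod.card, nsmul_eq_mul, mul_one]
        · rw [if_neg h]
          exact Ech_orth (sub_ne_zero.mpr fun hh => h hh.symm)
      rw [Finset.sum_congr rfl inner, Finset.sum_ite, Finset.sum_const_zero, add_zero,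
        Finset.sum_const, nsmul_eq_mul]
    have stepB : ∀ b : ZMod m, b ≠ 0 →
        ∑ i ∈ simplexIdx (n + 1) s,
          Ech m (b * ((a + ∑ k, (i k : ZMod m) * d k) - z)) = 0 := by
      intro b hb
      have hdec : ∀ i ∈ simplexIdx (n + 1) s,
          Ech m (b * ((a + ∑ k, (i k : ZMod m) * d k) - z))
            = Ech m (b * (a - z)) * ∏ k, Ech m (b * d k) ^ i k := by
        intro i _
        have h1 : b * ((a + ∑ k, (i k : ZMod m) * d k) - z)
            = b * (a - z) + ∑ k, ((i k : ℕ) : ZMod m) * (b * d k) := by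
          have h2 : ∑ k : Fin (n + 1), ((i k : ℕ) : ZMod m) * (b * d k)
              = b * ∑ k, ((i k : ℕ) : ZMod m) * d k := by
            rw [Finset.mul_sum]
            exact Finset.sum_congr rfl fun k _ => by ring
          rw [h2]
          ring
        rw [h1, Ech_add, Ech_sum]
        congr 1
        exact Finset.prod_congr rfl fun k _ => Ech_natmul _ _
      rw [Finset.sum_congr rfl hdec, ← Finset.mul_sum]
      have hw0 : (Fin.cons 1 (fun k : Fin (n + 1) => Ech m (b * d k)) : Fin (n + 2) → ℂ) 0 = 1 :=
        Fin.cons_zero _ _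
      have hws : ∀ k : Fin (n + 1),
          (Fin.cons 1 (fun k : Fin (n + 1) => Ech m (b * d k)) : Fin (n + 2) → ℂ) k.succ
            = Ech m (b * d k) := fun k => Fin.cons_succ _ _ k
      have hvne : ∀ k : Fin (n + 1), Ech m (b * d k) ≠ 1 := by
        intro k h
        rw [Ech_eq_one_iff] at h
        exact hb (((hd k).mul_left_eq_zero).mp h)
      have hvv : ∀ j k : Fin (n + 1), j ≠ k → Ech m (b * d j) ≠ Ech m (b * d k) := by
        intro j k hjk h
        have hu : IsUnit (d j - d k) := by
          rcases lt_or_gt_of_ne hjk with hlt | hgt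
          · have := (hdiff j k hlt).neg
            rwa [neg_sub] at this
          · exact hdiff k j hgt
        have h5 : Ech m (b * (d j - d k)) * Ech m (b * d k) = 1 * Ech m (b * d k) := by
          rw [← Ech_add, one_mul, show b * (d j - d k) + b * d k = b * d j from by ring, h]
        have h6 : Ech m (b * (d j - d k)) = 1 := mul_right_cancel₀ (Ech_ne_zero _) h5
        rw [Ech_eq_one_iff] at h6
        exact hb ((hu.mul_left_eq_zero).mp h6)
      have hwinj : Function.Injective
          (Fin.cons 1 (fun k : Fin (n + 1) => Ech m (b * d k)) : Fin (n + 2) → ℂ) := by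
        intro p q hpq
        rcases Fin.eq_zero_or_eq_succ p with rfl | ⟨j, rfl⟩ <;>
          rcases Fin.eq_zero_or_eq_succ q with rfl | ⟨k, rfl⟩
        · rfl
        · rw [hw0, hws k] at hpq; exact absurd hpq.symm (hvne k)
        · rw [hw0, hws j] at hpq; exact absurd hpq (hvne j)
        · rw [hws j, hws k] at hpq
          by_contra hne
          exact hvv j k (fun h => hne (by rw [h])) hpq
      have hT : ∑ i ∈ simplexIdx (n + 1) s, ∏ k, Ech m (b * d k) ^ i k = 0 := by
        rw [simplex_sum_eq hs, hsum_eq _ hwinj (s - 1)]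
        have hdvd : m ∣ s + t := by
          rw [← ZMod.natCast_eq_zero_iff]
          push_cast
          rw [hst]
          ring
        obtain ⟨q, hq⟩ := hdvd
        have hwm : ∀ k : Fin (n + 2),
            (Fin.cons 1 (fun k : Fin (n + 1) => Ech m (b * d k)) : Fin (n + 2) → ℂ) k ^ m = 1 := by
          intro k
          rcases Fin.eq_zero_or_eq_succ k with rfl | ⟨j, rfl⟩
          · rw [hw0, one_pow]
          · rw [hws j]; exact Ech_pow_m _
        have hpow : ∀ k ∈ (univ : Finset (Fin (n + 2))),
            (Fin.cons 1 (fun k : Fin (n + 1) => Ech m (b * d k)) : Fin (n + 2) → ℂ) k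
                ^ (s - 1 + (n + 1)) *
              (∏ j ∈ univ.erase k,
                ((Fin.cons 1 (fun k : Fin (n + 1) => Ech m (b * d k)) : Fin (n + 2) → ℂ) k
                  - (Fin.cons 1 (fun k : Fin (n + 1) => Ech m (b * d k)) : Fin (n + 2) → ℂ) j))⁻¹
            = (Fin.cons 1 (fun k : Fin (n + 1) => Ech m (b * d k)) : Fin (n + 2) → ℂ) k
                ^ (n - t) *
              (∏ j ∈ univ.erase k,
                ((Fin.cons 1 (fun k : Fin (n + 1) => Ech m (b * d k)) : Fin (n + 2) → ℂ) k
                  - (Fin.cons 1 (fun k : Fin (n + 1) => Ech m (b * d k)) : Fin (n + 2) → ℂ) j))⁻¹ := by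
          intro k _
          have he : s - 1 + (n + 1) = (n - t) + m * q := by omega
          rw [he, pow_add, pow_mul, hwm k, one_pow, mul_one]
        rw [Finset.sum_congr rfl hpow]
        exact lagrange_vanish _ hwinj (n - t) (Nat.sub_le n t)
      rw [hT, mul_zero]
    have grand : ∑ b : ZMod m, ∑ i ∈ simplexIdx (n + 1) s,
        Ech m (b * ((a + ∑ k, (i k : ZMod m) * d k) - z))
          = (#(simplexIdx (n + 1) s) : ℂ) := by
      rw [Finset.sum_eq_single 0]
      · have h7 : ∀ i ∈ simplexIdx (n + 1) s,
            Ech m ((0 : ZMod m) * ((a + ∑ k, (i k : ZMod m) * d k) - z)) = 1 := by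
          intro i _; rw [zero_mul, Ech_zero]
        rw [Finset.sum_congr rfl h7, Finset.sum_const, nsmul_eq_mul, mul_one]
      · intro b _ hb; exact stepB b hb
      · intro h; exact absurd (Finset.mem_univ 0) h
    rw [← stepA, Finset.sum_comm, grand]
  have hm0 : (m : ℂ) ≠ 0 := Nat.cast_ne_zero.mpr (by omega)
  have := mul_right_cancel₀ hm0 ((key x).trans (key y).symm)
  exact_mod_cast this
end

section
/- Let m and s be positive integers and a, d_1, d_2 ∈ ℤ/mℤ. If the arithmetic triangle AS(a, (d_1, d_2), s) is balanced in ℤ/mℤ, then d_1, d_2, and d_2 − d_1 are all invertible in ℤ/mℤ. In particular, no arithmetic triangle is balanced in ℤ/mℤ when m is even. -/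
open Finset

def Tri (s : ℕ) : Finset (ℕ × ℕ) :=
  (Finset.range s ×ˢ Finset.range s).filter fun p => p.1 + p.2 < s

lemma AS_two (m s : ℕ) (a d₁ d₂ : ZMod m) :
    AS m 2 a ![d₁, d₂] s = (Tri s).val.map fun p => a + p.1 * d₁ + p.2 * d₂ := by
  have einj : Function.Injective (fun i : Fin 2 → ℕ => (i 0, i 1)) := by
    intro i j h
    simp only [Prod.mk.injEq] at h
    funext k
    fin_cases k <;> simp [h.1, h.2]
  have hF : (simplexIdx 2 s).map ⟨_, einj⟩ = Tri s := by
    ext q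
    simp only [Finset.mem_map, simplexIdx, Tri, Finset.mem_filter, Fintype.mem_piFinset,
      mem_product, mem_range, Fin.sum_univ_two, Function.Embedding.coeFn_mk]
    constructor
    · rintro ⟨i, ⟨hi, hsum⟩, rfl⟩
      exact ⟨⟨hi 0, hi 1⟩, hsum⟩
    · rintro ⟨⟨h1, h2⟩, h3⟩
      refine ⟨![q.1, q.2], ⟨?_, ?_⟩, ?_⟩
      · intro k; fin_cases k <;> simpa
      · simpa
      · simp
  calc AS m 2 a ![d₁, d₂] s
      = (simplexIdx 2 s).val.map
          ((fun p : ℕ × ℕ => a + p.1 * d₁ + p.2 * d₂) ∘ fun i => (i 0, i 1)) := by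
        unfold AS
        apply Multiset.map_congr rfl
        intro i _
        simp [Fin.sum_univ_two, add_assoc]
    _ = ((simplexIdx 2 s).val.map fun i : Fin 2 → ℕ => (i 0, i 1)).map
          (fun p : ℕ × ℕ => a + p.1 * d₁ + p.2 * d₂) := by
        rw [Multiset.map_map]
    _ = (Tri s).val.map fun p => a + p.1 * d₁ + p.2 * d₂ := by
        rw [← hF, Finset.map_val]
        rfl

lemma count_AS_s10 (m s : ℕ) (a d₁ d₂ x : ZMod m) :
    (AS m 2 a ![d₁, d₂] s).count x
      = ∑ i ∈ range s, ∑ j ∈ range s,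
          if i + j < s ∧ a + (i : ZMod m) * d₁ + (j : ZMod m) * d₂ = x then 1 else 0 := by
  rw [AS_two, Multiset.count_map]
  have h1 : Multiset.card ((Tri s).val.filter fun p => x = a + p.1 * d₁ + p.2 * d₂)
      = ((Tri s).filter fun p => x = a + p.1 * d₁ + p.2 * d₂).card := rfl
  rw [h1]
  unfold Tri
  rw [Finset.filter_filter, Finset.card_filter, Finset.sum_product]
  apply Finset.sum_congr rfl; intro i _
  apply Finset.sum_congr rfl; intro j _
  congr 1
  simp [eq_comm]

lemma count_AS_left (m s : ℕ) (b e x : ZMod m) :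
    (AS m 2 b ![e, 0] s).count x
      = ∑ i ∈ range s, if b + (i : ZMod m) * e = x then (s - i) else 0 := by
  rw [count_AS_s10]
  apply Finset.sum_congr rfl; intro i hi
  rw [mem_range] at hi
  have step : ∀ j ∈ range s,
      (if i + j < s ∧ b + (i : ZMod m) * e + (j : ZMod m) * 0 = x then 1 else 0)
        = if b + (i : ZMod m) * e = x then (if j < s - i then 1 else 0) else 0 := by
    intro j _
    by_cases h : b + (i : ZMod m) * e = x
    · by_cases h2 : j < s - i
      · rw [if_pos ⟨by omega, by simpa using h⟩, if_pos h, if_pos h2]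
      · rw [if_neg (by push_neg; intro h3; omega), if_pos h, if_neg h2]
    · rw [if_neg (by push_neg; intro _; simpa using h), if_neg h]
  rw [Finset.sum_congr rfl step]
  by_cases h : b + (i : ZMod m) * e = x
  · rw [if_pos h]
    simp only [if_pos h]
    rw [← Finset.card_filter]
    have : (range s).filter (fun j => j < s - i) = range (s - i) := by
      ext j; simp only [mem_filter, mem_range]; omega
    rw [this, Finset.card_range]
  · simp [h]

lemma core (p s : ℕ) (hp : 2 ≤ p) (hs : 0 < s) :
    (∑ i ∈ range s, if i % p = p - 1 then (s - i) else 0)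
      < ∑ i ∈ range s, if i % p = 0 then (s - i) else 0 := by
  rw [← Finset.sum_filter, ← Finset.sum_filter]
  set B := (range s).filter (fun i => i % p = p - 1) with hBdef
  set A := (range s).filter (fun i => i % p = 0) with hAdef
  have hBmem : ∀ i ∈ B, p - 1 ≤ i ∧ i < s ∧ i % p = p - 1 := by
    intro i hi
    rw [hBdef, mem_filter, mem_range] at hi
    have := Nat.mod_le i p
    exact ⟨by omega, hi.1, hi.2⟩
  have hsub : B.image (fun i => i - (p - 1)) ⊆ A := by
    intro j hj
    rw [Finset.mem_image] at hj
    obtain ⟨i, hi, rfl⟩ := hj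
    obtain ⟨h1, h2, h3⟩ := hBmem i hi
    rw [hAdef, mem_filter, mem_range]
    have hd := Nat.div_add_mod i p
    have heq : i - (p - 1) = p * (i / p) := by omega
    exact ⟨by omega, by rw [heq, Nat.mul_mod_right]⟩
  have hinj : Set.InjOn (fun i => i - (p - 1)) B := by
    intro x hx y hy h
    have h1 := hBmem x hx
    have h2 := hBmem y hy
    simp only at h
    omega
  have h1 : ∑ j ∈ B.image (fun i => i - (p - 1)), (s - j) ≤ ∑ j ∈ A, (s - j) :=
    Finset.sum_le_sum_of_subset hsub
  have h2 : ∑ j ∈ B.image (fun i => i - (p - 1)), (s - j)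
      = ∑ i ∈ B, (s - (i - (p - 1))) := Finset.sum_image (fun x hx y hy => hinj hx hy)
  have h3 : ∑ i ∈ B, (s - (i - (p - 1))) = ∑ i ∈ B, ((s - i) + (p - 1)) := by
    apply Finset.sum_congr rfl
    intro i hi
    have := hBmem i hi
    omega
  rw [h2, h3, Finset.sum_add_distrib, Finset.sum_const, smul_eq_mul] at h1
  rcases B.eq_empty_or_nonempty with hBe | hBne
  · rw [hBe]
    simp only [Finset.sum_empty]
    have h0A : 0 ∈ A := by
      rw [hAdef, mem_filter, mem_range]
      exact ⟨hs, Nat.zero_mod p⟩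
    have h4 : s ≤ ∑ j ∈ A, (s - j) := by
      simpa using Finset.single_le_sum (f := fun j => s - j) (fun _ _ => Nat.zero_le _) h0A
    omega
  · have hc : 1 ≤ B.card := Finset.card_pos.mpr hBne
    have : 1 ≤ B.card * (p - 1) :=
      Nat.one_le_iff_ne_zero.mpr (Nat.mul_ne_zero (by omega) (by omega))
    omega

lemma balanced_map {m p : ℕ} [NeZero m] [NeZero p] (h : p ∣ m) {M : Multiset (ZMod m)}
    (hM : IsBalanced M) : IsBalanced (M.map (ZMod.castHom h (ZMod p))) := by
  set π := ZMod.castHom h (ZMod p) with hπ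
  have hsur : Function.Surjective π := by
    intro x
    refine ⟨((x.val : ℕ) : ZMod m), ?_⟩
    rw [hπ, map_natCast]
    exact ZMod.natCast_rightInverse x
  have hfib : ∀ x y : ZMod p,
      (Finset.univ.filter fun z : ZMod m => x = π z).card
        = (Finset.univ.filter fun z : ZMod m => y = π z).card := by
    intro x y
    obtain ⟨t, ht⟩ := hsur (y - x)
    apply Finset.card_bij' (i := fun z _ => z + t) (j := fun z _ => z - t)
    · intro z hz
      rw [mem_filter] at *
      refine ⟨mem_univ _, ?_⟩
      rw [map_add, ← hz.2, ht]
      ring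
    · intro z hz
      rw [mem_filter] at *
      refine ⟨mem_univ _, ?_⟩
      rw [map_sub, ← hz.2, ht]
      ring
    · intro z _; ring
    · intro z _; ring
  set c := M.count 0 with hc
  have hcount : ∀ z : ZMod m, M.count z = c := fun z => hM z 0
  have key : ∀ x : ZMod p, (M.map π).count x
      = c * (Finset.univ.filter fun z : ZMod m => x = π z).card := by
    intro x
    rw [Multiset.count_map]
    have h1 : Multiset.card (M.filter fun z => x = π z)
        = ∑ z ∈ Finset.univ, (M.filter fun z => x = π z).count z := by
      rw [eq_comm, ← Multiset.toFinset_sum_count_eq (M.filter fun z => x = π z)]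
      rw [eq_comm]
      apply Finset.sum_subset (Finset.subset_univ _)
      intro z _ hz
      rw [Multiset.mem_toFinset] at hz
      exact Multiset.count_eq_zero.mpr hz
    rw [h1]
    have h2 : ∀ z ∈ Finset.univ, (M.filter fun w => x = π w).count z
        = if x = π z then c else 0 := by
      intro z _
      rw [Multiset.count_filter]
      by_cases hz : x = π z
      · rw [if_pos hz, if_pos hz, hcount]
      · rw [if_neg hz, if_neg hz]
    rw [Finset.sum_congr rfl h2, ← Finset.sum_filter, Finset.sum_const, smul_eq_mul, mul_comm]
  intro x y
  rw [key x, key y, hfib x y]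

lemma AS_swap (m s : ℕ) (a x y : ZMod m) : AS m 2 a ![x, y] s = AS m 2 a ![y, x] s := by
  rw [AS_two, AS_two]
  have hswap : (Tri s).map ⟨Prod.swap, Prod.swap_injective⟩ = Tri s := by
    ext q
    simp only [Finset.mem_map, Tri, mem_filter, mem_product, mem_range,
      Function.Embedding.coeFn_mk]
    constructor
    · rintro ⟨r, ⟨⟨hr1, hr2⟩, hr3⟩, rfl⟩
      exact ⟨⟨hr2, hr1⟩, by simpa [Nat.add_comm] using hr3⟩
    · rintro ⟨⟨h1, h2⟩, h3⟩
      exact ⟨q.swap, ⟨⟨h2, h1⟩, by simpa [Nat.add_comm] using h3⟩, by simp⟩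
  conv_lhs => rw [← hswap]
  rw [Finset.map_val, Multiset.map_map]
  apply Multiset.map_congr rfl
  intro q _
  simp only [Function.comp_apply, Function.Embedding.coeFn_mk, Prod.fst_swap, Prod.snd_swap]
  ring

lemma AS_shift (m s : ℕ) (hs : 0 < s) (a x y : ZMod m) :
    AS m 2 a ![x, y] s = AS m 2 (a + ((s - 1 : ℕ) : ZMod m) * x) ![-x, y - x] s := by
  rw [AS_two, AS_two]
  set φ : ℕ × ℕ → ℕ × ℕ := fun q => (s - 1 - q.1 - q.2, q.2) with hφ
  have hmem : ∀ q : ℕ × ℕ, q ∈ Tri s → q.1 + q.2 ≤ s - 1 ∧ q.1 < s ∧ q.2 < s := by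
    intro q hq
    rw [Tri, mem_filter, mem_product, mem_range, mem_range] at hq
    omega
  have hφT : ∀ q ∈ Tri s, φ q ∈ Tri s := by
    intro q hq
    obtain ⟨h1, h2, h3⟩ := hmem q hq
    rw [Tri, mem_filter, mem_product, mem_range, mem_range]
    refine ⟨⟨?_, ?_⟩, ?_⟩ <;> simp only [hφ] <;> omega
  have hinj : Set.InjOn φ (Tri s) := by
    intro q hq r hr hqr
    have h1 := hmem q hq
    have h2 := hmem r hr
    rw [hφ, Prod.ext_iff] at hqr
    simp only at hqr
    exact Prod.ext (by omega) hqr.2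
  have himg : (Tri s).image φ = Tri s := by
    apply Finset.eq_of_subset_of_card_le
    · intro q hq
      rw [Finset.mem_image] at hq
      obtain ⟨r, hr, rfl⟩ := hq
      exact hφT r hr
    · rw [Finset.card_image_of_injOn hinj]
  have hval : (Tri s).val.map φ = (Tri s).val := by
    rw [← Finset.image_val_of_injOn hinj, himg]
  conv_rhs => rw [← hval]
  rw [Multiset.map_map]
  apply Multiset.map_congr rfl
  intro q hq
  obtain ⟨hle, h1, h2⟩ := hmem q hq
  simp only [Function.comp_apply, hφ]
  have hre : s - 1 - q.1 - q.2 = (s - 1) - (q.1 + q.2) := by omega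
  have hcast : ((s - 1 - q.1 - q.2 : ℕ) : ZMod m)
      = ((s - 1 : ℕ) : ZMod m) - (q.1 : ZMod m) - (q.2 : ZMod m) := by
    rw [hre, Nat.cast_sub hle, Nat.cast_add]
    ring
  rw [hcast]
  ring

lemma unit_of_balanced (m s : ℕ) (hm : 0 < m) (hs : 0 < s) (a e₁ e₂ : ZMod m)
    (hB : IsBalanced (AS m 2 a ![e₁, e₂] s)) : IsUnit e₂ := by
  haveI : NeZero m := ⟨hm.ne'⟩
  by_contra hu
  have hg : ¬ Nat.Coprime e₂.val m := by
    intro hc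
    apply hu
    have h1 := (ZMod.isUnit_iff_coprime e₂.val m).mpr hc
    rwa [ZMod.natCast_rightInverse e₂] at h1
  set g := Nat.gcd e₂.val m with hgdef
  have hg1 : g ≠ 1 := hg
  have hgpos : g ≠ 0 := by
    intro h0
    have := Nat.eq_zero_of_gcd_eq_zero_right h0
    omega
  set p := g.minFac with hpdef
  have hp : p.Prime := Nat.minFac_prime hg1
  have hpm : p ∣ m := (Nat.minFac_dvd g).trans (Nat.gcd_dvd_right _ _)
  have hpe : p ∣ e₂.val := (Nat.minFac_dvd g).trans (Nat.gcd_dvd_left _ _)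
  haveI : NeZero p := ⟨hp.pos.ne'⟩
  haveI : Fact p.Prime := ⟨hp⟩
  set π := ZMod.castHom hpm (ZMod p) with hπ
  have hπe₂ : π e₂ = 0 := by
    have h1 : π e₂ = ((e₂.val : ℕ) : ZMod p) := by
      rw [hπ, ZMod.castHom_apply, ← ZMod.natCast_val]
    rw [h1]
    exact (ZMod.natCast_eq_zero_iff _ _).mpr hpe
  have hB' : IsBalanced (AS p 2 (π a) ![π e₁, 0] s) := by
    have hb := balanced_map hpm hB
    have hmap : (AS m 2 a ![e₁, e₂] s).map π = AS p 2 (π a) ![π e₁, π e₂] s := by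
      rw [AS_two, AS_two, Multiset.map_map]
      apply Multiset.map_congr rfl
      intro q _
      simp [Function.comp_apply, map_add, map_mul, map_natCast]
    rw [hmap, hπe₂] at hb
    exact hb
  rcases eq_or_ne (π e₁) 0 with h0 | hne
  · have h1 := hB' (π a) (π a + 1)
    rw [count_AS_left, count_AS_left, h0] at h1
    have hL : (∑ i ∈ range s, if π a + (i : ZMod p) * 0 = π a then (s - i) else 0)
        = ∑ i ∈ range s, (s - i) := by
      apply Finset.sum_congr rfl
      intro i _
      rw [if_pos (by ring)]
    have hR : (∑ i ∈ range s, if π a + (i : ZMod p) * 0 = π a + 1 then (s - i) else 0) = 0 := by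
      apply Finset.sum_eq_zero
      intro i _
      rw [if_neg]
      intro hcontra
      rw [mul_zero, add_zero] at hcontra
      have : (1 : ZMod p) = 0 := by
        have := congrArg (fun z => z - π a) hcontra
        simpa using this.symm
      exact one_ne_zero this
    rw [hL, hR] at h1
    have h2 : s ≤ ∑ i ∈ range s, (s - i) := by
      simpa using Finset.single_le_sum (f := fun i => s - i) (fun _ _ => Nat.zero_le _)
        (Finset.mem_range.mpr hs)
    omega
  · have key : ∀ c : ℕ, (AS p 2 (π a) ![π e₁, 0] s).count (π a + (c : ZMod p) * π e₁)
        = ∑ i ∈ range s, if i % p = c % p then (s - i) else 0 := by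
      intro c
      rw [count_AS_left]
      apply Finset.sum_congr rfl
      intro i _
      congr 1
      rw [eq_iff_iff]
      constructor
      · intro hcontra
        have h2 : (i : ZMod p) * π e₁ = (c : ZMod p) * π e₁ := by
          have := congrArg (fun z => z - π a) hcontra
          simpa [add_sub_cancel_left] using this
        have h3 : (i : ZMod p) = (c : ZMod p) := mul_right_cancel₀ hne h2
        exact (ZMod.natCast_eq_natCast_iff' i c p).mp h3
      · intro hmod
        have h3 : (i : ZMod p) = (c : ZMod p) := (ZMod.natCast_eq_natCast_iff' i c p).mpr hmod
        rw [h3]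
    have h1 := hB' (π a + ((p - 1 : ℕ) : ZMod p) * π e₁) (π a + ((0 : ℕ) : ZMod p) * π e₁)
    rw [key (p - 1), key 0] at h1
    have hc := core p s hp.two_le hs
    rw [Nat.zero_mod, Nat.mod_eq_of_lt (by have := hp.pos; omega)] at h1
    rw [h1] at hc
    exact lt_irrefl _ hc

/-- If the arithmetic triangle `AS(a, (d₁, d₂), s)` is balanced in `ZMod m`, then `d₁`, `d₂`
and `d₂ - d₁` are all invertible; in particular (since for `m` even not all three can be
invertible) no arithmetic triangle is balanced when `m` is even. -/
theorem stmt10 (m s : ℕ) (hm : 0 < m) (hs : 0 < s) (a d₁ d₂ : ZMod m)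
    (hB : IsBalanced (AS m 2 a ![d₁, d₂] s)) :
    (IsUnit d₁ ∧ IsUnit d₂ ∧ IsUnit (d₂ - d₁)) ∧ ¬ Even m := by
  have hd2 : IsUnit d₂ := unit_of_balanced m s hm hs a d₁ d₂ hB
  have hd1 : IsUnit d₁ := by
    apply unit_of_balanced m s hm hs a d₂ d₁
    rw [AS_swap]
    exact hB
  have hd21 : IsUnit (d₂ - d₁) := by
    apply unit_of_balanced m s hm hs (a + ((s - 1 : ℕ) : ZMod m) * d₁) (-d₁)
    rw [← AS_shift m s hs a d₁ d₂]
    exact hB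
  refine ⟨⟨hd1, hd2, hd21⟩, ?_⟩
  intro hEven
  have h2m : (2 : ℕ) ∣ m := hEven.two_dvd
  set π := ZMod.castHom h2m (ZMod 2) with hπ
  have hone : ∀ z : ZMod 2, IsUnit z → z = 1 := by
    intro z hz
    have hz0 : z ≠ 0 := hz.ne_zero
    revert hz0
    revert z
    decide
  have e1 : π d₁ = 1 := hone _ (hd1.map π)
  have e2 : π d₂ = 1 := hone _ (hd2.map π)
  have e3 : π (d₂ - d₁) = 0 := by rw [map_sub, e1, e2, sub_self]
  have e4 : π (d₂ - d₁) = 1 := hone _ (hd21.map π)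
  rw [e3] at e4
  exact absurd e4 (by decide)
end

section
/- Let s be a positive integer and a, d ∈ ℤ/4ℤ with d invertible (d = 1 or 3). Then the arithmetic tetrahedron AS(a, (0, d, −d), s) is not balanced in ℤ/4ℤ. -/
open Finset

/-! ### Auxiliary counting machinery -/

/-- Number of points of the tetrahedron of size `s` with `i 1 - i 2 ≡ r (mod 4)`. -/
def cnt (r : ZMod 4) (s : ℕ) : ℕ :=
  ((Fintype.piFinset fun _ : Fin 3 => range s).filter
    (fun i => (i 0 + i 1 + i 2 < s) ∧ ((i 1 : ZMod 4) - (i 2 : ZMod 4)) = r)).card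

/-- Shell count: as `cnt r (s+4)` but restricted to `i 0 < 4`. -/
def Ecard (r : ZMod 4) (s : ℕ) : ℕ :=
  ((Fintype.piFinset fun _ : Fin 3 => range (s+4)).filter
    (fun i => i 0 < 4 ∧ i 0 + i 1 + i 2 < s + 4 ∧ ((i 1 : ZMod 4) - (i 2 : ZMod 4)) = r)).card

/-- Layer count: points with fixed total sum `u` and `i 0 < 4`. -/
def Qcard (r : ZMod 4) (u : ℕ) : ℕ :=
  ((Fintype.piFinset fun _ : Fin 3 => range (u+1)).filter
    (fun i => i 0 < 4 ∧ i 0 + i 1 + i 2 = u ∧ ((i 1 : ZMod 4) - (i 2 : ZMod 4)) = r)).card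

lemma mem_pi3 {t : ℕ} {i : Fin 3 → ℕ} :
    i ∈ Fintype.piFinset (fun _ : Fin 3 => range t) ↔ i 0 < t ∧ i 1 < t ∧ i 2 < t := by
  simp only [Fintype.mem_piFinset, mem_range]
  exact ⟨fun h => ⟨h 0, h 1, h 2⟩, fun ⟨a, b, c⟩ k => by fin_cases k <;> assumption⟩

lemma card_filter_split {α : Type*} (A : Finset α) (p q : α → Prop)
    [DecidablePred p] [DecidablePred q] :
    (A.filter p).card = (A.filter fun a => p a ∧ q a).card
      + (A.filter fun a => p a ∧ ¬ q a).card := by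
  rw [← Finset.filter_filter, ← Finset.filter_filter,
    Finset.card_filter_add_card_filter_not]

lemma cnt_step (r : ZMod 4) (s : ℕ) : cnt r (s+4) = Ecard r s + cnt r s := by
  rw [cnt, card_filter_split _ _ (fun i => i 0 < 4)]
  congr 1
  · unfold Ecard; congr 1; ext i; simp only [mem_filter]; tauto
  · rw [cnt]
    refine Finset.card_bij' (fun i _ => ![i 0 - 4, i 1, i 2])
      (fun i _ => ![i 0 + 4, i 1, i 2]) ?_ ?_ ?_ ?_
    · rintro i hi
      simp only [mem_filter, mem_pi3] at hi ⊢
      obtain ⟨⟨h0, h1, h2⟩, ⟨hsum, hd⟩, h4⟩ := hi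
      push_neg at h4
      simp only [Matrix.cons_val_zero, Matrix.cons_val_one, Matrix.head_cons,
        Matrix.cons_val_two, Matrix.tail_cons]
      refine ⟨⟨by omega, by omega, by omega⟩, by omega, ?_⟩
      simpa using hd
    · rintro i hi
      simp only [mem_filter, mem_pi3] at hi ⊢
      obtain ⟨⟨h0, h1, h2⟩, hsum, hd⟩ := hi
      simp only [Matrix.cons_val_zero, Matrix.cons_val_one, Matrix.head_cons,
        Matrix.cons_val_two, Matrix.tail_cons]
      refine ⟨⟨by omega, by omega, by omega⟩, ⟨by omega, ?_⟩, by omega⟩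
      simpa using hd
    · rintro i hi
      simp only [mem_filter, mem_pi3] at hi
      funext k; fin_cases k <;> simp <;> omega
    · rintro i hi
      funext k; fin_cases k <;> simp

lemma E_step (r : ZMod 4) (s : ℕ) : Ecard r (s+1) = Ecard r s + Qcard r (s+4) := by
  rw [Ecard, card_filter_split _ _ (fun i => i 0 + i 1 + i 2 < s + 4)]
  congr 1
  · rw [Ecard]
    have he : ((Fintype.piFinset fun _ : Fin 3 => range (s+1+4)).filter
        (fun i => (i 0 < 4 ∧ i 0 + i 1 + i 2 < s + 1 + 4 ∧ ((i 1 : ZMod 4) - (i 2 : ZMod 4)) = r)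
          ∧ i 0 + i 1 + i 2 < s + 4))
        = ((Fintype.piFinset fun _ : Fin 3 => range (s+4)).filter
        (fun i => i 0 < 4 ∧ i 0 + i 1 + i 2 < s + 4 ∧ ((i 1 : ZMod 4) - (i 2 : ZMod 4)) = r)) := by
      ext i
      simp only [mem_filter, mem_pi3]
      constructor
      · rintro ⟨⟨h0, h1, h2⟩, ⟨hi0, hsum, hd⟩, hlt⟩
        exact ⟨⟨by omega, by omega, by omega⟩, hi0, hlt, hd⟩
      · rintro ⟨⟨h0, h1, h2⟩, hi0, hsum, hd⟩
        exact ⟨⟨by omega, by omega, by omega⟩, ⟨hi0, by omega, hd⟩, hsum⟩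
    rw [he]
  · rw [Qcard]
    congr 1
    ext i
    simp only [mem_filter, mem_pi3]
    constructor
    · rintro ⟨⟨h0, h1, h2⟩, ⟨hi0, hsum, hd⟩, hge⟩
      exact ⟨⟨h0, h1, h2⟩, hi0, by omega, hd⟩
    · rintro ⟨⟨h0, h1, h2⟩, hi0, hsum, hd⟩
      exact ⟨⟨h0, h1, h2⟩, ⟨hi0, by omega, hd⟩, by omega⟩

/-- The involution used to match residue classes `0` and `2` on a layer. -/
def thetaF (i : Fin 3 → ℕ) : Fin 3 → ℕ :=
  if 2 ≤ i 0 then ![i 0 - 2, i 1, i 2 + 2]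
  else if 2 ≤ i 2 then ![i 0 + 2, i 1, i 2 - 2]
  else ![i 0, i 1 + 2 * i 2 - 1, 1 - i 2]

lemma theta_valA {i : Fin 3 → ℕ} (h : 2 ≤ i 0) : thetaF i = ![i 0 - 2, i 1, i 2 + 2] := by
  rw [thetaF, if_pos h]

lemma theta_valB {i : Fin 3 → ℕ} (h0 : ¬ 2 ≤ i 0) (h2 : 2 ≤ i 2) :
    thetaF i = ![i 0 + 2, i 1, i 2 - 2] := by
  rw [thetaF, if_neg h0, if_pos h2]

lemma theta_valC {i : Fin 3 → ℕ} (h0 : ¬ 2 ≤ i 0) (h2 : ¬ 2 ≤ i 2) :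
    thetaF i = ![i 0, i 1 + 2 * i 2 - 1, 1 - i 2] := by
  rw [thetaF, if_neg h0, if_neg h2]

lemma c04 : (0 : ZMod 4) = 4 := by decide

lemma theta_mem (r : ZMod 4) (u : ℕ) (hu : 4 ≤ u) (i : Fin 3 → ℕ)
    (h0 : i 0 < 4) (hsum : i 0 + i 1 + i 2 = u) (hd : ((i 1 : ZMod 4) - (i 2 : ZMod 4)) = r) :
    thetaF i 0 < 4 ∧ thetaF i 0 + thetaF i 1 + thetaF i 2 = u ∧
      ((thetaF i 1 : ZMod 4) - (thetaF i 2 : ZMod 4)) = r + 2 := by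
  by_cases hA : 2 ≤ i 0
  · rw [theta_valA hA]
    simp only [Matrix.cons_val_zero, Matrix.cons_val_one, Matrix.head_cons,
      Matrix.cons_val_two, Matrix.tail_cons]
    refine ⟨by omega, by omega, ?_⟩
    push_cast
    linear_combination hd + c04
  · by_cases hB : 2 ≤ i 2
    · rw [theta_valB hA hB]
      simp only [Matrix.cons_val_zero, Matrix.cons_val_one, Matrix.head_cons,
        Matrix.cons_val_two, Matrix.tail_cons]
      refine ⟨by omega, by omega, ?_⟩
      rw [Nat.cast_sub hB]
      push_cast
      linear_combination hd
    · rw [theta_valC hA hB]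
      simp only [Matrix.cons_val_zero, Matrix.cons_val_one, Matrix.head_cons,
        Matrix.cons_val_two, Matrix.tail_cons]
      have h1 : 2 ≤ i 1 := by omega
      refine ⟨by omega, by omega, ?_⟩
      interval_cases h : i 2
      · simp only [Nat.mul_zero, Nat.add_zero, Nat.sub_zero]
        rw [Nat.cast_sub (by omega : 1 ≤ i 1)]
        push_cast
        linear_combination hd + c04
      · have e : i 1 + 2 * 1 - 1 = i 1 + 1 := by omega
        rw [e]
        push_cast
        linear_combination hd

lemma theta_invol (u : ℕ) (hu : 4 ≤ u) (i : Fin 3 → ℕ)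
    (h0 : i 0 < 4) (hsum : i 0 + i 1 + i 2 = u) : thetaF (thetaF i) = i := by
  by_cases hA : 2 ≤ i 0
  · rw [theta_valA hA]
    rw [theta_valB (by simp; omega) (by simp)]
    funext k; fin_cases k <;> simp <;> omega
  · by_cases hB : 2 ≤ i 2
    · rw [theta_valB hA hB]
      rw [theta_valA (by simp)]
      funext k; fin_cases k <;> simp <;> omega
    · rw [theta_valC hA hB]
      rw [theta_valC (by simpa using hA) (by simp)]
      have h1 : 2 ≤ i 1 := by omega
      funext k; fin_cases k <;> simp <;> omega

lemma Q_swap (u : ℕ) (hu : 4 ≤ u) : Qcard 0 u = Qcard 2 u := by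
  rw [Qcard, Qcard]
  refine Finset.card_bij' (fun i _ => thetaF i) (fun i _ => thetaF i) ?_ ?_ ?_ ?_
  · rintro i hi
    simp only [mem_filter, mem_pi3] at hi ⊢
    obtain ⟨⟨b0, b1, b2⟩, h0, hsum, hd⟩ := hi
    obtain ⟨m0, msum, md⟩ := theta_mem 0 u hu i h0 hsum hd
    rw [zero_add] at md
    exact ⟨⟨by omega, by omega, by omega⟩, m0, msum, md⟩
  · rintro i hi
    simp only [mem_filter, mem_pi3] at hi ⊢
    obtain ⟨⟨b0, b1, b2⟩, h0, hsum, hd⟩ := hi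
    obtain ⟨m0, msum, md⟩ := theta_mem 2 u hu i h0 hsum hd
    rw [show (2 : ZMod 4) + 2 = 0 from by decide] at md
    exact ⟨⟨by omega, by omega, by omega⟩, m0, msum, md⟩
  · rintro i hi
    simp only [mem_filter, mem_pi3] at hi
    exact theta_invol u hu i hi.2.1 hi.2.2.1
  · rintro i hi
    simp only [mem_filter, mem_pi3] at hi
    exact theta_invol u hu i hi.2.1 hi.2.2.1

lemma E_const (s : ℕ) : Ecard 0 s = Ecard 2 s + 2 := by
  induction s with
  | zero => decide
  | succ n ih =>
      rw [E_step, E_step, ih, Q_swap (n+4) (by omega)]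
      omega

lemma cnt_lt (s : ℕ) (hs : 0 < s) : cnt 2 s < cnt 0 s := by
  induction s using Nat.strong_induction_on with
  | _ s ih =>
    rcases lt_or_ge s 5 with h | h
    · interval_cases s
      · decide
      · decide
      · decide
      · decide
    · obtain ⟨t, rfl⟩ : ∃ t, s = t + 4 := ⟨s - 4, by omega⟩
      rw [cnt_step, cnt_step, E_const]
      have := ih t (by omega) (by omega)
      omega

lemma count_AS_s15 (a d : ZMod 4) (hd : IsUnit d) (s : ℕ) (r : ZMod 4) :
    Multiset.count (a + r * d) (AS 4 3 a ![0, d, -d] s) = cnt r s := by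
  have h1 : cnt r s = ((simplexIdx 3 s).filter
      (fun i => ((i 1 : ZMod 4) - (i 2 : ZMod 4)) = r)).card := by
    rw [cnt, simplexIdx, Finset.filter_filter]
    congr 1; ext i
    simp only [Fin.sum_univ_three]
  rw [AS, Multiset.count_map, h1]
  have h2 : ((simplexIdx 3 s).filter
      (fun i => ((i 1 : ZMod 4) - (i 2 : ZMod 4)) = r)).card
      = Multiset.card (Multiset.filter
        (fun i => ((i 1 : ZMod 4) - (i 2 : ZMod 4)) = r) (simplexIdx 3 s).val) := rfl
  rw [h2]
  congr 1
  apply Multiset.filter_congr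
  intro i _
  simp only [Fin.sum_univ_three, Matrix.cons_val_zero, Matrix.cons_val_one, Matrix.head_cons,
    Matrix.cons_val_two, Matrix.tail_cons]
  constructor
  · intro h
    have h' := add_left_cancel h
    refine (hd.mul_right_cancel ?_).symm
    linear_combination h'
  · intro h
    have h' : (i 1 : ZMod 4) * d + (i 2 : ZMod 4) * (-d) = r * d := by
      rw [← h]; ring
    rw [mul_zero, zero_add] at *
    rw [h']

/-- The arithmetic tetrahedron `AS(a, (0, d, −d), s)` with `d` invertible is not balanced
in `ZMod 4`. -/
theorem stmt15 (s : ℕ) (hs : 0 < s) (a d : ZMod 4) (hd : IsUnit d) :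
    ¬ IsBalanced (AS 4 3 a ![0, d, -d] s) := by
  intro hb
  have h0 := count_AS_s15 a d hd s 0
  have h2 := count_AS_s15 a d hd s 2
  have hxy := hb (a + 0 * d) (a + 2 * d)
  rw [h0, h2] at hxy
  have := cnt_lt s hs
  omega
end

section
/- Let m be an even positive integer not divisible by 3 and a, d_1, d_2, d_3 ∈ ℤ/mℤ with gcd(d_1, m) = gcd(d_3 − d_2, m) = 2 and d_2, d_3, d_2 − d_1, d_1 − d_3 invertible. Then the arithmetic tetrahedron AS(a, (d_1, d_2, d_3), s) is balanced in ℤ/mℤ for every positive integer s with s ≡ 0 or −2 (mod m). -/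
open Finset

set_option linter.unusedSectionVars false

namespace Stmt17

/-! ### Geometric-sum machinery -/

noncomputable def T1 (w : ℂ) (t : ℕ) : ℂ := ∑ i ∈ range t, w ^ i
noncomputable def T2 (w2 w3 : ℂ) (t : ℕ) : ℂ := ∑ i ∈ range t, w2 ^ i * T1 w3 (t - i)
noncomputable def T3 (w1 w2 w3 : ℂ) (s : ℕ) : ℂ := ∑ i ∈ range s, w1 ^ i * T2 w2 w3 (s - i)

lemma T1_zero (w : ℂ) : T1 w 0 = 0 := by simp [T1]
lemma T1_succ (w : ℂ) (t : ℕ) : T1 w (t+1) = w * T1 w t + 1 := geom_sum_succ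
lemma T1_mul (w : ℂ) (t : ℕ) : (w - 1) * T1 w t = w^t - 1 := by
  rw [T1, mul_comm]; exact geom_sum_mul w t
lemma T2_zero (w2 w3 : ℂ) : T2 w2 w3 0 = 0 := by simp [T2]
lemma T3_zero (w1 w2 w3 : ℂ) : T3 w1 w2 w3 0 = 0 := by simp [T3]

lemma T2_succ (w2 w3 : ℂ) (t : ℕ) : T2 w2 w3 (t+1) = w3 * T2 w2 w3 t + T1 w2 (t+1) := by
  unfold T2
  have h : ∀ i ∈ range (t+1), w2^i * T1 w3 (t+1-i) = w3 * (w2^i * T1 w3 (t-i)) + w2^i := by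
    intro i hi
    have hi' : i ≤ t := by simpa using Nat.lt_succ_iff.mp (mem_range.mp hi)
    have : t + 1 - i = (t - i) + 1 := by omega
    rw [this, T1_succ]; ring
  rw [Finset.sum_congr rfl h, Finset.sum_add_distrib, ← Finset.mul_sum,
    Finset.sum_range_succ, Nat.sub_self, T1_zero, mul_zero, add_zero]
  rfl

lemma T3_succ (w1 w2 w3 : ℂ) (s : ℕ) :
    T3 w1 w2 w3 (s+1) = w3 * T3 w1 w2 w3 s + ∑ i ∈ range (s+1), w1^i * T1 w2 (s+1-i) := by
  unfold T3
  have h : ∀ i ∈ range (s+1), w1^i * T2 w2 w3 (s+1-i)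
      = w3 * (w1^i * T2 w2 w3 (s-i)) + w1^i * T1 w2 (s+1-i) := by
    intro i hi
    have hi' : i ≤ s := by simpa using Nat.lt_succ_iff.mp (mem_range.mp hi)
    have : s + 1 - i = (s - i) + 1 := by omega
    rw [this, T2_succ]; ring
  rw [Finset.sum_congr rfl h, Finset.sum_add_distrib, ← Finset.mul_sum,
    Finset.sum_range_succ, Nat.sub_self, T2_zero, mul_zero, add_zero]

lemma D12 (w1 w2 : ℂ) : ∀ s : ℕ,
    (w1 - w2) * ∑ i ∈ range (s+1), w1^i * w2^(s-i) = w1^(s+1) - w2^(s+1) := by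
  intro s
  induction s with
  | zero => simp
  | succ s ih =>
    rw [Finset.sum_range_succ' (fun i => w1^i * w2^(s+1-i)) (s+1)]
    have h : ∀ i ∈ range (s+1), w1^(i+1) * w2^(s+1-(i+1)) = w1 * (w1^i * w2^(s-i)) := by
      intro i hi
      have : s + 1 - (i+1) = s - i := by omega
      rw [this, pow_succ]; ring
    rw [Finset.sum_congr rfl h, ← Finset.mul_sum]
    simp only [pow_zero, Nat.sub_zero, one_mul]
    linear_combination w1 * ih

lemma Rsum (w1 w2 : ℂ) (s : ℕ) :
    (w1-1)*(w2-1)*(w1-w2) * ∑ i ∈ range (s+1), w1^i * T1 w2 (s+1-i)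
      = w2*(w1-1)*(w1^(s+1)-w2^(s+1)) - (w1-w2)*(w1^(s+1)-1) := by
  have h : (w2-1) * ∑ i ∈ range (s+1), w1^i * T1 w2 (s+1-i)
      = w2 * ∑ i ∈ range (s+1), w1^i * w2^(s-i) - ∑ i ∈ range (s+1), w1^i := by
    rw [Finset.mul_sum, Finset.mul_sum, ← Finset.sum_sub_distrib]
    refine Finset.sum_congr rfl fun i hi => ?_
    have hi' : i ≤ s := by simpa using Nat.lt_succ_iff.mp (mem_range.mp hi)
    have he : s + 1 - i = (s - i) + 1 := by omega
    have hg := T1_mul w2 ((s-i)+1)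
    rw [he]
    calc (w2-1) * (w1^i * T1 w2 (s-i+1)) = w1^i * ((w2-1) * T1 w2 (s-i+1)) := by ring
      _ = w1^i * (w2^(s-i+1) - 1) := by rw [hg]
      _ = w2 * (w1^i * w2^(s-i)) - w1^i := by rw [pow_succ]; ring
  have hD := D12 w1 w2 s
  have hG : (w1 - 1) * ∑ i ∈ range (s+1), w1^i = w1^(s+1) - 1 := T1_mul w1 (s+1)
  linear_combination (w1-1)*(w1-w2)*h + w2*(w1-1)*hD - (w1-w2)*hG

lemma T3_closed (w1 w2 w3 : ℂ) : ∀ s : ℕ,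
    (w1-1)*(w2-1)*(w3-1)*(w1-w2)*(w1-w3)*(w2-w3) * T3 w1 w2 w3 s
      = (-(w1-w2)*(w1-w3)*(w2-w3))
      + (w1^2*(w2-1)*(w3-1)*(w2-w3)) * w1^s
      + (-w2^2*(w1-1)*(w3-1)*(w1-w3)) * w2^s
      + (-((-(w1-w2)*(w1-w3)*(w2-w3)) + (w1^2*(w2-1)*(w3-1)*(w2-w3))
          + (-w2^2*(w1-1)*(w3-1)*(w1-w3)))) * w3^s := by
  intro s
  induction s with
  | zero => rw [T3_zero]; simp only [pow_zero]; ring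
  | succ s ih =>
    rw [T3_succ]
    have hR := Rsum w1 w2 s
    linear_combination ((w1-w3)*(w2-w3)*(w3-1)) * hR + w3 * ih

lemma T3_eq_zero₀ (w1 w2 w3 : ℂ) (h1 : w1 ≠ 1) (h2 : w2 ≠ 1) (h3 : w3 ≠ 1)
    (h12 : w1 ≠ w2) (h13 : w1 ≠ w3) (h23 : w2 ≠ w3) (s : ℕ)
    (hp1 : w1^s = 1) (hp2 : w2^s = 1) (hp3 : w3^s = 1) : T3 w1 w2 w3 s = 0 := by
  have hc := T3_closed w1 w2 w3 s
  rw [hp1, hp2, hp3] at hc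
  have hz : (w1-1)*(w2-1)*(w3-1)*(w1-w2)*(w1-w3)*(w2-w3) * T3 w1 w2 w3 s = 0 := by
    rw [hc]; ring
  have hP : (w1-1)*(w2-1)*(w3-1)*(w1-w2)*(w1-w3)*(w2-w3) ≠ 0 := by
    simp only [mul_ne_zero_iff, sub_ne_zero]
    exact ⟨⟨⟨⟨⟨h1, h2⟩, h3⟩, h12⟩, h13⟩, h23⟩
  exact (mul_eq_zero.mp hz).resolve_left hP

lemma T3_eq_zero₂ (w1 w2 w3 : ℂ) (h1 : w1 ≠ 1) (h2 : w2 ≠ 1) (h3 : w3 ≠ 1)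
    (h12 : w1 ≠ w2) (h13 : w1 ≠ w3) (h23 : w2 ≠ w3)
    (h01 : w1 ≠ 0) (h02 : w2 ≠ 0) (h03 : w3 ≠ 0) (s : ℕ)
    (hp1 : w1^s * w1^2 = 1) (hp2 : w2^s * w2^2 = 1) (hp3 : w3^s * w3^2 = 1) :
    T3 w1 w2 w3 s = 0 := by
  have hc := T3_closed w1 w2 w3 s
  have hz : ((w1-1)*(w2-1)*(w3-1)*(w1-w2)*(w1-w3)*(w2-w3) * T3 w1 w2 w3 s)
      * (w1^2*w2^2*w3^2) = 0 := by
    rw [hc]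
    linear_combination (w1^2*(w2-1)*(w3-1)*(w2-w3)) * w2^2*w3^2 * hp1
      + (-w2^2*(w1-1)*(w3-1)*(w1-w3)) * w1^2*w3^2 * hp2
      + (-((-(w1-w2)*(w1-w3)*(w2-w3)) + (w1^2*(w2-1)*(w3-1)*(w2-w3))
          + (-w2^2*(w1-1)*(w3-1)*(w1-w3)))) * w1^2*w2^2 * hp3
  have hP : ((w1-1)*(w2-1)*(w3-1)*(w1-w2)*(w1-w3)*(w2-w3)) * (w1^2*w2^2*w3^2) ≠ 0 := by
    apply mul_ne_zero
    · simp only [mul_ne_zero_iff, sub_ne_zero]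
      exact ⟨⟨⟨⟨⟨h1, h2⟩, h3⟩, h12⟩, h13⟩, h23⟩
    · exact mul_ne_zero (mul_ne_zero (pow_ne_zero _ h01) (pow_ne_zero _ h02)) (pow_ne_zero _ h03)
  have := mul_eq_zero.mp (by linear_combination hz :
    ((w1-1)*(w2-1)*(w3-1)*(w1-w2)*(w1-w3)*(w2-w3)) * (w1^2*w2^2*w3^2) * T3 w1 w2 w3 s = 0)
  exact this.resolve_left hP

/-! ### The degenerate case `w1 = 1`, `w2 = w3 = -1` -/

lemma T1_neg_one (u : ℕ) : T1 (-1 : ℂ) u = if Even u then 0 else 1 := neg_one_geom_sum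

lemma Psum : ∀ r : ℕ, (∑ j ∈ range (2*r), T1 (-1:ℂ) (j+1) = r)
    ∧ (∑ j ∈ range (2*r+1), T1 (-1:ℂ) (j+1) = r+1) := by
  intro r
  induction r with
  | zero => constructor <;> simp [T1_neg_one]
  | succ r ih =>
    obtain ⟨ih1, ih2⟩ := ih
    have e1 : 2*(r+1) = (2*r+1)+1 := by ring
    constructor
    · rw [e1, Finset.sum_range_succ, ih2, T1_neg_one]
      have : Even (2*r+1+1) := by rw [Nat.even_iff]; omega
      rw [if_pos this]; push_cast; ring
    · rw [e1, Finset.sum_range_succ, Finset.sum_range_succ, ih2, T1_neg_one, T1_neg_one]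
      have h1 : Even (2*r+1+1) := by rw [Nat.even_iff]; omega
      have h2 : ¬ Even (2*r+1+1+1) := by rw [Nat.even_iff]; omega
      rw [if_pos h1, if_neg h2]; push_cast; ring

lemma RB (s : ℕ) : ∑ i ∈ range (s+1), (1:ℂ)^i * T1 (-1:ℂ) (s+1-i)
    = ∑ j ∈ range (s+1), T1 (-1:ℂ) (j+1) := by
  have := Finset.sum_range_reflect (fun j => T1 (-1:ℂ) (j+1)) (s+1)
  rw [← this]
  refine Finset.sum_congr rfl fun i hi => ?_
  have hi' : i ≤ s := by simpa using Nat.lt_succ_iff.mp (mem_range.mp hi)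
  have : s + 1 - 1 - i + 1 = s + 1 - i := by omega
  rw [one_pow, one_mul, this]

lemma T3_B : ∀ r : ℕ, T3 1 (-1) (-1) (2*r) = 0 ∧ T3 1 (-1) (-1) (2*r+1) = r+1 := by
  intro r
  induction r with
  | zero =>
    refine ⟨T3_zero _ _ _, ?_⟩
    have := T3_succ 1 (-1) (-1) 0
    rw [this, T3_zero, RB 0]
    simp [T1_neg_one]
  | succ r ih =>
    obtain ⟨ih1, ih2⟩ := ih
    have e1 : 2*(r+1) = (2*r+1)+1 := by ring
    have h1 : T3 1 (-1) (-1) (2*(r+1)) = 0 := by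
      rw [e1, T3_succ, ih2, RB]
      have := (Psum (r+1)).1
      rw [show 2*(r+1) = 2*r+1+1 by ring] at this
      rw [this]; push_cast; ring
    refine ⟨h1, ?_⟩
    rw [show 2*(r+1)+1 = (2*(r+1))+1 by ring, T3_succ, h1, RB]
    have := (Psum (r+1)).2
    rw [this]
    push_cast; ring

lemma T3_B_even (s : ℕ) (hs : Even s) : T3 1 (-1) (-1) s = 0 := by
  obtain ⟨r, hr⟩ := hs
  have := (T3_B r).1
  rwa [show 2*r = r + r by ring, ← hr] at this

/-! ### The simplex sum as an iterated sum -/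

lemma mem_simplexIdx {s : ℕ} (i : Fin 3 → ℕ) :
    i ∈ simplexIdx 3 s ↔ i 0 + i 1 + i 2 < s := by
  simp only [simplexIdx, Finset.mem_filter, Fintype.mem_piFinset, Finset.mem_range,
    Fin.sum_univ_three]
  constructor
  · exact fun h => h.2
  · intro h
    have h0 : i 0 < s := by omega
    have h1 : i 1 < s := by omega
    have h2 : i 2 < s := by omega
    exact ⟨fun k => by fin_cases k <;> assumption, h⟩

lemma sum_simplexIdx (s : ℕ) (f : ℕ → ℕ → ℕ → ℂ) :
    ∑ i ∈ simplexIdx 3 s, f (i 0) (i 1) (i 2)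
      = ∑ i1 ∈ range s, ∑ i2 ∈ range (s - i1), ∑ i3 ∈ range (s - i1 - i2), f i1 i2 i3 := by
  have h1 : ∀ i1 : ℕ, ∑ i2 ∈ range (s - i1), ∑ i3 ∈ range (s - i1 - i2), f i1 i2 i3
      = ∑ p ∈ (range (s - i1)).sigma (fun i2 => range (s - i1 - i2)), f i1 p.1 p.2 :=
    fun i1 => (Finset.sum_sigma (range (s-i1)) (fun i2 => range (s-i1-i2))
      (fun p => f i1 p.1 p.2)).symm
  rw [Finset.sum_congr rfl (fun i1 _ => h1 i1),
    ← Finset.sum_sigma (range s) (fun i1 => (range (s - i1)).sigma fun i2 => range (s - i1 - i2))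
      (fun x => f x.1 x.2.1 x.2.2)]
  refine Finset.sum_nbij' (fun v => ⟨v 0, v 1, v 2⟩) (fun x => ![x.1, x.2.1, x.2.2])
    ?_ ?_ ?_ ?_ ?_
  · intro v hv
    rw [mem_simplexIdx] at hv
    simp only [Finset.mem_sigma, Finset.mem_range]
    omega
  · intro x hx
    simp only [Finset.mem_sigma, Finset.mem_range] at hx
    rw [mem_simplexIdx]
    simp only [Matrix.cons_val_zero, Matrix.cons_val_one, Matrix.head_cons,
      Matrix.cons_val_two, Matrix.tail_cons]
    omega
  · intro v _
    funext k
    fin_cases k <;> rfl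
  · intro x _
    rfl
  · intro v _
    rfl

lemma T3_nested (w1 w2 w3 : ℂ) (s : ℕ) : T3 w1 w2 w3 s
    = ∑ i1 ∈ range s, ∑ i2 ∈ range (s - i1), ∑ i3 ∈ range (s - i1 - i2),
        w1^i1 * (w2^i2 * w3^i3) := by
  unfold T3 T2 T1
  refine Finset.sum_congr rfl fun i1 _ => ?_
  rw [Finset.mul_sum]
  refine Finset.sum_congr rfl fun i2 _ => ?_
  rw [Finset.mul_sum, Finset.mul_sum]

/-! ### Characters of `ZMod m` -/

variable {m : ℕ} [NeZero m] {ζ : ℂ}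

lemma pow_mod (hζm : ζ^m = 1) (k : ℕ) : ζ^(k % m) = ζ^k := by
  conv_rhs => rw [← Nat.div_add_mod k m]
  rw [pow_add, pow_mul, hζm, one_pow, one_mul]

lemma pow_val_add (hζm : ζ^m = 1) (x y : ZMod m) :
    ζ^(x+y).val = ζ^x.val * ζ^y.val := by
  rw [ZMod.val_add, pow_mod hζm, pow_add]

lemma pow_val_natmul (hζm : ζ^m = 1) (n : ℕ) (z : ZMod m) :
    ζ^(((n : ZMod m) * z).val) = (ζ^z.val)^n := by
  induction n with
  | zero => simp
  | succ n ih =>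
    have : ((n+1 : ℕ) : ZMod m) * z = (n : ZMod m) * z + z := by push_cast; ring
    rw [this, pow_val_add hζm, ih, pow_succ]

lemma pow_val_eq_one_iff (hζ : IsPrimitiveRoot ζ m) (z : ZMod m) :
    ζ^z.val = 1 ↔ z = 0 := by
  rw [hζ.pow_eq_one_iff_dvd]
  constructor
  · intro h
    have := ZMod.val_lt z
    have hv : z.val = 0 := by
      rcases Nat.eq_zero_or_pos z.val with h0 | h0
      · exact h0
      · exact absurd (Nat.le_of_dvd h0 h) (by omega)
    rwa [ZMod.val_eq_zero] at hv
  · rintro rfl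
    simp [ZMod.val_zero]

lemma pow_val_ne_one (hζ : IsPrimitiveRoot ζ m) {z : ZMod m} (hz : z ≠ 0) :
    ζ^z.val ≠ 1 := fun h => hz ((pow_val_eq_one_iff hζ z).mp h)

lemma pow_val_inj (hζ : IsPrimitiveRoot ζ m) {x y : ZMod m}
    (h : ζ^x.val = ζ^y.val) : x = y := by
  have hζm : ζ^m = 1 := hζ.pow_eq_one
  have hne : ζ ≠ 0 := hζ.ne_zero (NeZero.ne m)
  have hadd : ζ^((x - y) + y).val = ζ^(x-y).val * ζ^(y.val) := pow_val_add hζm _ _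
  rw [sub_add_cancel, h] at hadd
  have h1 : ζ^(x-y).val = 1 := by
    have hy : ζ^(y.val) ≠ 0 := pow_ne_zero _ hne
    have h2 : (1:ℂ) * ζ^(y.val) = ζ^(x-y).val * ζ^(y.val) := by rw [one_mul]; exact hadd
    exact (mul_right_cancel₀ hy h2).symm
  exact sub_eq_zero.mp ((pow_val_eq_one_iff hζ _).mp h1)

lemma sum_zmod_val (g : ℕ → ℂ) : ∑ c : ZMod m, g (ZMod.val c) = ∑ k ∈ range m, g k := by
  refine Finset.sum_nbij' (fun c => ZMod.val c) (fun k => (k : ZMod m)) ?_ ?_ ?_ ?_ ?_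
  · intro c _; exact Finset.mem_range.mpr (ZMod.val_lt c)
  · intro k _; exact Finset.mem_univ _
  · intro c _; exact ZMod.natCast_rightInverse c
  · intro k hk; exact ZMod.val_cast_of_lt (Finset.mem_range.mp hk)
  · intro c _; rfl

lemma orth (hζ : IsPrimitiveRoot ζ m) (z : ZMod m) :
    ∑ c : ZMod m, ζ^((c * z).val) = if z = 0 then (m : ℂ) else 0 := by
  have hζm : ζ^m = 1 := hζ.pow_eq_one
  by_cases hz : z = 0
  · subst hz
    simp [Finset.card_univ, ZMod.card]
  · rw [if_neg hz]
    have key : ∀ c : ZMod m, ζ^((c * z).val) = (ζ^z.val)^(c.val) := by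
      intro c
      rw [show c * z = ((c.val : ℕ) : ZMod m) * z by rw [ZMod.natCast_rightInverse c]]
      exact pow_val_natmul hζm c.val z
    rw [Finset.sum_congr rfl (fun c _ => key c), sum_zmod_val (fun k => (ζ^z.val)^k),
      geom_sum_eq (pow_val_ne_one hζ hz)]
    have : (ζ^z.val)^m = 1 := by
      rw [← pow_mul, mul_comm, pow_mul, hζm, one_pow]
    rw [this, sub_self, zero_div]

/-! ### Arithmetic of `ZMod m` -/

lemma gcd2_mul_eq_zero {z c : ZMod m} (hz : Nat.gcd z.val m = 2) (h : c * z = 0) :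
    c = 0 ∨ c = ((m/2 : ℕ) : ZMod m) := by
  have h2m : 2 ∣ m := hz ▸ Nat.gcd_dvd_right _ _
  have h2v : 2 ∣ z.val := hz ▸ Nat.gcd_dvd_left _ _
  obtain ⟨m', hm'⟩ := h2m
  obtain ⟨v', hv'⟩ := h2v
  have hdvd : m ∣ c.val * z.val := by
    rw [← ZMod.natCast_eq_zero_iff]
    push_cast
    rw [ZMod.natCast_rightInverse c, ZMod.natCast_rightInverse z]
    exact h
  have hcop : Nat.Coprime m' v' := by
    have h' : Nat.gcd (2*v') (2*m') = 2 * Nat.gcd v' m' := Nat.gcd_mul_left 2 v' m'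
    rw [← hv', ← hm', hz] at h'
    have : Nat.gcd v' m' = 1 := by omega
    exact Nat.Coprime.symm this
  have hm'dvd : m' ∣ c.val := by
    apply hcop.dvd_of_dvd_mul_right
    have h2 : 2 * m' ∣ 2 * (c.val * v') := by
      rw [← hm', show 2 * (c.val * v') = c.val * (2 * v') by ring, ← hv']
      exact hdvd
    exact (Nat.mul_dvd_mul_iff_left (by norm_num : 0 < 2)).mp h2
  have hclt : c.val < m := ZMod.val_lt c
  have hm'pos : 0 < m' := by
    have := NeZero.pos m; omega
  obtain ⟨t, ht⟩ := hm'dvd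
  have ht2 : t = 0 ∨ t = 1 := by
    rcases Nat.lt_or_ge t 2 with h' | h'
    · omega
    · exfalso; have : m' * 2 ≤ m' * t := Nat.mul_le_mul_left m' h'; omega
  rcases ht2 with rfl | rfl
  · left
    have : c.val = 0 := by omega
    rwa [ZMod.val_eq_zero] at this
  · right
    have hcv : c.val = m / 2 := by omega
    rw [← ZMod.natCast_rightInverse c, hcv]

lemma half_mul_even (h2m : 2 ∣ m) {z : ZMod m} (hz : 2 ∣ z.val) :
    ((m/2 : ℕ) : ZMod m) * z = 0 := by
  obtain ⟨m', hm'⟩ := h2m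
  obtain ⟨v', hv'⟩ := hz
  have h' : ((m/2 : ℕ) : ZMod m) * z = (((m/2) * z.val : ℕ) : ZMod m) := by
    push_cast
    rw [ZMod.natCast_rightInverse z]
  rw [h', ZMod.natCast_eq_zero_iff]
  refine ⟨v', ?_⟩
  rw [hv', hm']
  have : 2 * m' / 2 = m' := by omega
  rw [this]; ring

lemma unit_val_odd {z : ZMod m} (h : IsUnit z) (h2m : 2 ∣ m) : ¬ 2 ∣ z.val := by
  have hc : Nat.Coprime z.val m := by
    rw [← ZMod.isUnit_iff_coprime]
    rwa [ZMod.natCast_rightInverse z]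
  intro h2v
  have := Nat.dvd_gcd h2v h2m
  rw [hc] at this
  omega

lemma odd_sub_one_even_val {z : ZMod m} (hz : ¬ 2 ∣ z.val) : 2 ∣ (z - 1).val := by
  have h1 : 1 ≤ z.val := by omega
  have hlt : z.val < m := ZMod.val_lt z
  have heq : z - 1 = ((z.val - 1 : ℕ) : ZMod m) := by
    rw [Nat.cast_sub h1, ZMod.natCast_rightInverse z, Nat.cast_one]
  rw [heq, ZMod.val_cast_of_lt (by omega)]
  omega

lemma zeta_half (hζ : IsPrimitiveRoot ζ m) (h2m : 2 ∣ m) (hm2 : 2 ≤ m) :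
    ζ^(m/2) = -1 := by
  have hsq : ζ^(m/2) * ζ^(m/2) = 1 := by
    rw [← pow_add, show m/2 + m/2 = m by omega, hζ.pow_eq_one]
  rcases mul_self_eq_one_iff.mp hsq with h | h
  · exact absurd h (hζ.pow_ne_one_of_pos_of_lt (by omega) (by omega))
  · exact h

end Stmt17

open Stmt17 in
/-- For `m` even not divisible by `3`, with `gcd(d₁, m) = gcd(d₃ − d₂, m) = 2` and
`d₂`, `d₃`, `d₂ − d₁`, `d₁ − d₃` invertible, the arithmetic tetrahedron
`AS(a, (d₁, d₂, d₃), s)` is balanced for all `s ≡ 0` or `−2 (mod m)`. -/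
theorem stmt17 (m s : ℕ) (hm : 0 < m) (hs : 0 < s) (heven : Even m) (h3 : ¬ 3 ∣ m)
    (a d₁ d₂ d₃ : ZMod m)
    (hg₁ : Nat.gcd (ZMod.val d₁) m = 2) (hg₃₂ : Nat.gcd (ZMod.val (d₃ - d₂)) m = 2)
    (h₂ : IsUnit d₂) (h₃ : IsUnit d₃) (h₂₁ : IsUnit (d₂ - d₁)) (h₁₃ : IsUnit (d₁ - d₃))
    (hsm : (s : ZMod m) = 0 ∨ (s : ZMod m) = -2) :
    IsBalanced (AS m 3 a ![d₁, d₂, d₃] s) := by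
  haveI : NeZero m := ⟨hm.ne'⟩
  have h2m : 2 ∣ m := hg₁ ▸ Nat.gcd_dvd_right _ _
  have hm2 : 2 ≤ m := Nat.le_of_dvd hm h2m
  set ζ : ℂ := Complex.exp (2 * Real.pi * Complex.I / m) with hζdef
  have hζ : IsPrimitiveRoot ζ m := Complex.isPrimitiveRoot_exp m hm.ne'
  have hζm : ζ^m = 1 := hζ.pow_eq_one
  have hζ0 : ζ ≠ 0 := hζ.ne_zero hm.ne'
  have hsev : Even s := by
    rcases hsm with h | h
    · have hd : m ∣ s := (ZMod.natCast_eq_zero_iff s m).mp h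
      obtain ⟨k, hk⟩ := dvd_trans h2m hd
      exact ⟨k, by omega⟩
    · have hd : m ∣ s + 2 := by
        have h' : ((s + 2 : ℕ) : ZMod m) = 0 := by push_cast; rw [h]; ring
        exact (ZMod.natCast_eq_zero_iff _ m).mp h'
      obtain ⟨k, hk⟩ := dvd_trans h2m hd
      exact ⟨k - 1, by omega⟩
  intro x y
  set f : (Fin 3 → ℕ) → ZMod m := fun i => a + ∑ k, (i k : ZMod m) * ![d₁, d₂, d₃] k with hf
  have hAS : AS m 3 a ![d₁, d₂, d₃] s = (simplexIdx 3 s).val.map f := rfl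
  have hcount : ∀ x : ZMod m, ((AS m 3 a ![d₁, d₂, d₃] s).count x : ℂ)
      = ∑ i ∈ simplexIdx 3 s, if x = f i then (1:ℂ) else 0 := by
    intro x
    rw [hAS, Multiset.count_map]
    have hcard : Multiset.card (Multiset.filter (fun i => x = f i) (simplexIdx 3 s).val)
        = (Finset.filter (fun i => x = f i) (simplexIdx 3 s)).card := rfl
    rw [hcard, Finset.card_filter]
    push_cast
    rfl
  have vanish : ∀ c : ZMod m, c ≠ 0 → ∑ i ∈ simplexIdx 3 s, ζ^((c * f i).val) = 0 := by
    intro c hc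
    have hterm : ∀ i ∈ simplexIdx 3 s, ζ^((c * f i).val)
        = ζ^((c*a).val) * ((ζ^((c*d₁).val))^(i 0) * ((ζ^((c*d₂).val))^(i 1)
            * (ζ^((c*d₃).val))^(i 2))) := by
      intro i _
      have hfe : c * f i = ((c*a + ((i 0 : ℕ) : ZMod m)*(c*d₁)) + ((i 1 : ℕ) : ZMod m)*(c*d₂))
          + ((i 2 : ℕ) : ZMod m)*(c*d₃) := by
        simp only [hf, Fin.sum_univ_three, Matrix.cons_val_zero, Matrix.cons_val_one,
          Matrix.head_cons, Matrix.cons_val_two, Matrix.tail_cons]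
        ring
      rw [hfe, pow_val_add hζm, pow_val_add hζm, pow_val_add hζm,
        pow_val_natmul hζm, pow_val_natmul hζm, pow_val_natmul hζm]
      ring
    rw [Finset.sum_congr rfl hterm, ← Finset.mul_sum]
    have hTs : ∑ i ∈ simplexIdx 3 s, (ζ^((c*d₁).val))^(i 0) * ((ζ^((c*d₂).val))^(i 1)
        * (ζ^((c*d₃).val))^(i 2)) = T3 (ζ^((c*d₁).val)) (ζ^((c*d₂).val)) (ζ^((c*d₃).val)) s :=
      (sum_simplexIdx s _).trans (T3_nested _ _ _ s).symm
    rw [hTs]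
    by_cases hc2 : c = ((m/2 : ℕ) : ZMod m)
    · -- degenerate case
      have h2d1 : 2 ∣ d₁.val := hg₁ ▸ Nat.gcd_dvd_left _ _
      have hcv : c.val = m/2 := by rw [hc2]; exact ZMod.val_cast_of_lt (by omega)
      have hζhalf : ζ^(m/2) = -1 := zeta_half hζ h2m hm2
      have hw1 : ζ^((c*d₁).val) = 1 := by
        have h0 : c * d₁ = 0 := by rw [hc2]; exact half_mul_even h2m h2d1
        rw [h0, ZMod.val_zero, pow_zero]
      have hw2 : ζ^((c*d₂).val) = -1 := by
        have h0 : c * (d₂ - 1) = 0 := by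
          rw [hc2]; exact half_mul_even h2m (odd_sub_one_even_val (unit_val_odd h₂ h2m))
        have he : c * d₂ = c := by linear_combination h0
        rw [he, hcv, hζhalf]
      have hw3 : ζ^((c*d₃).val) = -1 := by
        have h0 : c * (d₃ - 1) = 0 := by
          rw [hc2]; exact half_mul_even h2m (odd_sub_one_even_val (unit_val_odd h₃ h2m))
        have he : c * d₃ = c := by linear_combination h0
        rw [he, hcv, hζhalf]
      rw [hw1, hw2, hw3, T3_B_even s hsev, mul_zero]
    · -- generic case
      have hone : (1:ℂ) = ζ^((0 : ZMod m).val) := by rw [ZMod.val_zero, pow_zero]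
      have hne0 : ∀ z : ZMod m, IsUnit z → c * z ≠ 0 := fun z hz h =>
        hc ((hz.mul_left_eq_zero).mp h)
      have hgne : ∀ z : ZMod m, Nat.gcd z.val m = 2 → c * z ≠ 0 := by
        intro z hz h
        rcases gcd2_mul_eq_zero hz h with h0 | h0
        · exact hc h0
        · exact hc2 h0
      have hw1ne1 : ζ^((c*d₁).val) ≠ 1 := fun h =>
        hgne d₁ hg₁ (pow_val_inj hζ (h.trans hone))
      have hw2ne1 : ζ^((c*d₂).val) ≠ 1 := fun h =>
        hne0 d₂ h₂ (pow_val_inj hζ (h.trans hone))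
      have hw3ne1 : ζ^((c*d₃).val) ≠ 1 := fun h =>
        hne0 d₃ h₃ (pow_val_inj hζ (h.trans hone))
      have hw12 : ζ^((c*d₁).val) ≠ ζ^((c*d₂).val) := by
        intro h
        have he := pow_val_inj hζ h
        have h21 : IsUnit (d₁ - d₂) := by rw [← neg_sub d₂ d₁]; exact h₂₁.neg
        exact hne0 (d₁ - d₂) h21 (by linear_combination he)
      have hw13 : ζ^((c*d₁).val) ≠ ζ^((c*d₃).val) := by
        intro h
        have he := pow_val_inj hζ h
        exact hne0 (d₁ - d₃) h₁₃ (by linear_combination he)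
      have hw23 : ζ^((c*d₂).val) ≠ ζ^((c*d₃).val) := by
        intro h
        have he := pow_val_inj hζ h
        exact hgne (d₃ - d₂) hg₃₂ (by linear_combination -he)
      have hw0 : ∀ z : ZMod m, ζ^(z.val) ≠ (0:ℂ) := fun z => pow_ne_zero _ hζ0
      rcases hsm with hcase | hcase
      · have hds : m ∣ s := (ZMod.natCast_eq_zero_iff s m).mp hcase
        have hζs : ζ^s = 1 := (hζ.pow_eq_one_iff_dvd s).mpr hds
        have hp : ∀ v : ℕ, (ζ^v)^s = 1 := fun v => by
          rw [← pow_mul, mul_comm, pow_mul, hζs, one_pow]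
        rw [T3_eq_zero₀ _ _ _ hw1ne1 hw2ne1 hw3ne1 hw12 hw13 hw23 s (hp _) (hp _) (hp _),
          mul_zero]
      · have hds : m ∣ s + 2 := by
          have h' : ((s + 2 : ℕ) : ZMod m) = 0 := by push_cast; rw [hcase]; ring
          exact (ZMod.natCast_eq_zero_iff _ m).mp h'
        have hζs : ζ^(s+2) = 1 := (hζ.pow_eq_one_iff_dvd (s+2)).mpr hds
        have hp : ∀ v : ℕ, (ζ^v)^s * (ζ^v)^2 = 1 := fun v => by
          rw [← pow_add, ← pow_mul, mul_comm, pow_mul, hζs, one_pow]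
        rw [T3_eq_zero₂ _ _ _ hw1ne1 hw2ne1 hw3ne1 hw12 hw13 hw23
          (hw0 _) (hw0 _) (hw0 _) s (hp _) (hp _) (hp _), mul_zero]
  have key : ∀ x : ZMod m, (m:ℂ) * ((AS m 3 a ![d₁, d₂, d₃] s).count x : ℂ)
      = ∑ c : ZMod m, ζ^(((-c) * x).val) * ∑ i ∈ simplexIdx 3 s, ζ^((c * f i).val) := by
    intro x
    have hswap : ∑ c : ZMod m, ζ^(((-c) * x).val) * ∑ i ∈ simplexIdx 3 s, ζ^((c * f i).val)
        = ∑ i ∈ simplexIdx 3 s, ∑ c : ZMod m, ζ^((c * (f i - x)).val) := by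
      simp only [Finset.mul_sum]
      rw [Finset.sum_comm]
      refine Finset.sum_congr rfl fun i _ => Finset.sum_congr rfl fun c _ => ?_
      rw [← pow_val_add hζm, show (-c) * x + c * (f i) = c * (f i - x) by ring]
    rw [hswap]
    have horth : ∀ i ∈ simplexIdx 3 s, ∑ c : ZMod m, ζ^((c * (f i - x)).val)
        = if x = f i then (m:ℂ) else 0 := by
      intro i _
      rw [orth hζ (f i - x)]
      by_cases hfi : x = f i
      · rw [if_pos (by rw [hfi, sub_self]), if_pos hfi]
      · rw [if_neg (fun h => hfi (sub_eq_zero.mp h).symm), if_neg hfi]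
    rw [Finset.sum_congr rfl horth, hcount x, Finset.mul_sum]
    refine Finset.sum_congr rfl fun i _ => ?_
    by_cases hfi : x = f i
    · rw [if_pos hfi, if_pos hfi, mul_one]
    · rw [if_neg hfi, if_neg hfi, mul_zero]
  have hsingle : ∀ x' : ZMod m,
      ∑ c : ZMod m, ζ^(((-c) * x').val) * ∑ i ∈ simplexIdx 3 s, ζ^((c * f i).val)
        = ∑ i ∈ simplexIdx 3 s, ζ^(((0 : ZMod m) * f i).val) := by
    intro x'
    rw [Finset.sum_eq_single (0 : ZMod m)]
    · rw [neg_zero, zero_mul, ZMod.val_zero, pow_zero, one_mul]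
    · intro c _ hc
      rw [vanish c hc, mul_zero]
    · intro h
      exact absurd (Finset.mem_univ (0 : ZMod m)) h
  have hx := (key x).trans (hsingle x)
  have hy := (key y).trans (hsingle y)
  have hmne : (m:ℂ) ≠ 0 := Nat.cast_ne_zero.mpr hm.ne'
  exact Nat.cast_injective (mul_left_cancel₀ hmne (hx.trans hy.symm))
end

section
/- Let n ≥ 2, m_1, m_2 be positive integers with gcd(m_2, n!) = 1, and set m = m_1 m_2. Let a ∈ ℤ/mℤ and d = (d_1,...,d_n) ∈ (ℤ/mℤ)^n such that each π_{m_2}(d_i) and each π_{m_2}(d_j) − π_{m_2}(d_i) (i < j) is invertible in ℤ/m_2ℤ. Then for every positive integer s ≡ −t (mod m_2) with t ∈ {0,...,n−1}, the arithmetic simplex Δ = AS(a, m_1 d, s) of ℤ/mℤ satisfies m_Δ(x + m_1) = m_Δ(x) for all x ∈ ℤ/mℤ. -/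
open Finset

/-!
Let `π` be the projection to `ZMod m₂` and `e = π ∘ d`. A nontrivial additive character `ψ` of
`ZMod m₂` sums over `AS(a, e, s)` to `ψ a` times the complete homogeneous sum `h_{s-1}(z, 1)` of
`zₖ = ψ(eₖ)`, and the unit hypotheses make `z₁, …, zₙ, 1` distinct `m₂`-th roots of unity. That
sum is the divided difference of `X ^ (s - 1 + n)` at these `n + 1` nodes; as the nodes are
`m₂`-th roots of unity the exponent may be replaced by `n - 1 - t < n`, and a divided difference
at `n + 1` nodes kills every polynomial of degree `< n`. So all nontrivial character sums vanish
and `AS(0, e, s)` is balanced in `ZMod m₂`. Finally `Δ` is the image of `AS(0, e, s)` under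
`c ↦ a + m₁ c`, which turns translation by `1` into translation by `m₁`.
-/

open Polynomial

section DividedDifference

variable {K ι κ : Type*} [Field K] [DecidableEq ι] [DecidableEq κ]

def powDivDiff (s : Finset ι) (w : ι → K) (e : ℕ) : K :=
  ∑ k ∈ s, w k ^ e / ∏ l ∈ s.erase k, (w k - w l)

theorem powDivDiff_eq_zero {s : Finset ι} {w : ι → K} (hw : Set.InjOn w s) {e : ℕ}
    (he : e + 1 < #s) : powDivDiff s w e = 0 := by
  have hdeg : ((X : K[X]) ^ e).degree < #s := by
    rw [degree_X_pow]
    exact_mod_cast (by omega : e < #s)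
  simpa [coeff_X_pow, show #s - 1 ≠ e by omega, powDivDiff] using
    (Lagrange.coeff_eq_sum hw hdeg).symm

theorem powDivDiff_succ {s : Finset ι} {w : ι → K} (hw : Set.InjOn w s) {a : ι} (ha : a ∈ s)
    (e : ℕ) : powDivDiff s w (e + 1) = w a * powDivDiff s w e + powDivDiff (s.erase a) w e := by
  suffices powDivDiff s w (e + 1) - w a * powDivDiff s w e = powDivDiff (s.erase a) w e by
    linear_combination this
  rw [powDivDiff, powDivDiff, mul_sum, ← sum_sub_distrib, ← add_sum_erase _ _ ha]
  rw [show w a ^ (e + 1) / _ - w a * (w a ^ e / _) = 0 by ring, zero_add]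
  refine sum_congr rfl fun k hk => ?_
  obtain ⟨hka, hks⟩ := mem_erase.mp hk
  have hne : w k - w a ≠ 0 := sub_ne_zero.mpr fun h => hka (hw hks ha h)
  rw [← mul_prod_erase (s.erase k) (fun l => w k - w l) (mem_erase.mpr ⟨Ne.symm hka, ha⟩),
    erase_right_comm]
  field_simp
  ring

theorem powDivDiff_map (f : ι ↪ κ) (s : Finset ι) (w : κ → K) (e : ℕ) :
    powDivDiff (s.map f) w e = powDivDiff s (w ∘ f) e := by
  simp [powDivDiff, ← map_erase]

theorem powDivDiff_congr_of_pow_eq_one {s : Finset ι} {w : ι → K} {M : ℕ}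
    (hw : ∀ k ∈ s, w k ^ M = 1) {e e' : ℕ} (h : e ≡ e' [MOD M]) :
    powDivDiff s w e = powDivDiff s w e' :=
  sum_congr rfl fun k hk => by rw [pow_eq_pow_mod e (hw k hk), pow_eq_pow_mod e' (hw k hk), h]

end DividedDifference

section SimplexSum

variable {R : Type*} [CommSemiring R]

theorem mem_simplexIdx {n s : ℕ} {i : Fin n → ℕ} : i ∈ simplexIdx n s ↔ ∑ k, i k < s := by
  simp only [simplexIdx, mem_filter, Fintype.mem_piFinset, mem_range, and_iff_right_iff_imp]
  exact fun h k => (single_le_sum (fun _ _ => Nat.zero_le _) (mem_univ k)).trans_lt h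

def simplexSum (n s : ℕ) (z : Fin n → R) : R :=
  ∑ i ∈ simplexIdx n s, ∏ k, z k ^ i k

@[simp]
theorem simplexSum_zero (n : ℕ) (z : Fin n → R) : simplexSum n 0 z = 0 := by
  simp [simplexSum, simplexIdx]

theorem simplexSum_fin_zero (s : ℕ) (z : Fin 0 → R) : simplexSum 0 (s + 1) z = 1 := by
  have : simplexIdx 0 (s + 1) = {finZeroElim} := by
    ext i
    simp [mem_simplexIdx, funext_iff]
  simp [simplexSum, this]

theorem simplexSum_succ (n s : ℕ) (z : Fin (n + 1) → R) :
    simplexSum (n + 1) (s + 1) z =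
      z 0 * simplexSum (n + 1) s z + simplexSum n (s + 1) (Fin.tail z) := by
  rw [simplexSum, ← sum_filter_not_add_sum_filter _ (fun i => i 0 = 0), simplexSum, simplexSum,
    mul_sum]
  congr 1
  · refine sum_nbij' (fun i => Fin.cons (i 0 - 1) (Fin.tail i))
      (fun j => Fin.cons (j 0 + 1) (Fin.tail j)) (fun i hi => ?_) (fun j hj => ?_)
      (fun i hi => ?_) (fun j _ => ?_) (fun i hi => ?_) <;>
      simp only [mem_filter, mem_simplexIdx, Fin.sum_univ_succ, Fin.cons_zero, Fin.cons_succ,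
        Fin.tail_cons, Fin.prod_univ_succ] at *
    · simp only [Fin.tail]; omega
    · simp only [Fin.tail]; omega
    · rw [Nat.sub_add_cancel (Nat.pos_of_ne_zero hi.2), Fin.cons_self_tail]
    · rw [Nat.add_sub_cancel, Fin.cons_self_tail]
    · rw [← mul_assoc, ← pow_succ', Nat.sub_add_cancel (Nat.pos_of_ne_zero hi.2)]; rfl
  · refine sum_nbij' Fin.tail (fun j => (Fin.cons 0 j : Fin (n + 1) → ℕ)) (fun i hi => ?_)
      (fun j hj => ?_) (fun i hi => ?_) (fun j _ => ?_) (fun i hi => ?_) <;>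
      simp only [mem_filter, mem_simplexIdx, Fin.sum_univ_succ, Fin.cons_zero, Fin.cons_succ,
        Fin.tail_cons, Fin.prod_univ_succ] at *
    · simp only [Fin.tail]; omega
    · exact ⟨by omega, trivial⟩
    · rw [← hi.2, Fin.cons_self_tail]
    · rw [hi.2, pow_zero, one_mul]; rfl

end SimplexSum

section HomogeneousSum

variable {K : Type*} [Field K]

theorem Fin.snoc_eq_cons_snoc_tail {n : ℕ} {α : Type*} (z : Fin (n + 1) → α) (b : α) :
    (Fin.snoc z b : Fin (n + 2) → α) = Fin.cons (z 0) (Fin.snoc (Fin.tail z) b) := by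
  conv_lhs => rw [← Fin.cons_self_tail z]
  exact (Fin.cons_snoc_eq_snoc_cons ..).symm

theorem powDivDiff_cons_succ {n : ℕ} {x : K} {v : Fin n → K}
    (hv : Function.Injective (Fin.cons x v : Fin (n + 1) → K)) (e : ℕ) :
    powDivDiff univ (Fin.cons x v : Fin (n + 1) → K) (e + 1) =
      x * powDivDiff univ (Fin.cons x v : Fin (n + 1) → K) e + powDivDiff univ v e := by
  rw [powDivDiff_succ hv.injOn (mem_univ 0), Fin.univ_succ, erase_cons, powDivDiff_map]
  rfl

theorem simplexSum_eq_powDivDiff : ∀ {n : ℕ} (z : Fin n → K),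
    Function.Injective (Fin.snoc z 1 : Fin (n + 1) → K) →
      ∀ s, simplexSum n (s + 1) z = powDivDiff univ (Fin.snoc z 1 : Fin (n + 1) → K) (s + n)
  | 0, z, _, s => by simp [simplexSum_fin_zero, powDivDiff, Fin.snoc_zero]
  | n + 1, z, hz, s => by
    rw [Fin.snoc_eq_cons_snoc_tail] at hz ⊢
    have ih := simplexSum_eq_powDivDiff (Fin.tail z) (Fin.cons_injective_iff.mp hz).2
    induction s with
    | zero =>
      rw [simplexSum_succ, simplexSum_zero, mul_zero, zero_add, ih, zero_add, zero_add,
        powDivDiff_cons_succ hz, powDivDiff_eq_zero hz.injOn (by simp), mul_zero, zero_add]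
    | succ s ihs =>
      rw [simplexSum_succ, ihs, ih, show s + 1 + (n + 1) = s + (n + 1) + 1 by ring,
        powDivDiff_cons_succ hz, show s + 1 + n = s + (n + 1) by ring]

theorem simplexSum_eq_zero_of_pow_eq_one {n M s t : ℕ} {z : Fin n → K}
    (hz : Function.Injective (Fin.snoc z 1 : Fin (n + 1) → K)) (hM : ∀ k, z k ^ M = 1)
    (ht : t < n) (hst : M ∣ s + t) : simplexSum n s z = 0 := by
  obtain _ | s := s
  · exact simplexSum_zero n z
  have hw : ∀ k ∈ univ, (Fin.snoc z 1 : Fin (n + 1) → K) k ^ M = 1 := by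
    intro k _
    induction k using Fin.lastCases <;> simp [hM]
  have hmod : s + n ≡ n - 1 - t [MOD M] := by
    have := (Nat.modEq_zero_iff_dvd.mpr hst).add_right (n - 1 - t)
    rwa [show s + 1 + t + (n - 1 - t) = s + n by omega, zero_add] at this
  rw [simplexSum_eq_powDivDiff z hz, powDivDiff_congr_of_pow_eq_one hw hmod,
    powDivDiff_eq_zero hz.injOn (by rw [card_univ, Fintype.card_fin]; omega)]

end HomogeneousSum

theorem AddChar.map_sum_eq_prod {A M ι : Type*} [AddCommMonoid A] [CommMonoid M]
    (ψ : AddChar A M) (s : Finset ι) (f : ι → A) : ψ (∑ i ∈ s, f i) = ∏ i ∈ s, ψ (f i) := by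
  induction s using Finset.cons_induction with
  | empty => simp
  | cons a s ha ih => rw [sum_cons, prod_cons, AddChar.map_add_eq_mul, ih]

theorem AddChar.apply_pow_eq_one {N : ℕ} {C : Type*} [CommMonoid C] (ψ : AddChar (ZMod N) C)
    (x : ZMod N) : ψ x ^ N = 1 := by
  rw [← AddChar.map_nsmul_eq_pow, nsmul_eq_mul, ZMod.natCast_self, zero_mul,
    AddChar.map_zero_eq_one]

theorem AddChar.apply_ne_one_of_isUnit {N : ℕ} [NeZero N] {C : Type*} [CommMonoid C]
    {ψ : AddChar (ZMod N) C} (hψ : ψ ≠ 1) {u : ZMod N} (hu : IsUnit u) : ψ u ≠ 1 := by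
  intro h
  refine hψ ((AddChar.mulShift_unit_eq_one_iff ψ hu).mp ?_)
  by_contra h'
  exact (AddChar.zmod_char_ne_one_iff N _).mp h' (by simpa [AddChar.mulShift_apply] using h)

theorem Multiset.count_eq_count_of_sum_map_addChar_eq_zero {α : Type*} [AddCommGroup α]
    [Fintype α] [DecidableEq α] {G : Multiset α}
    (hG : ∀ ψ : AddChar α ℂ, ψ ≠ 0 → (G.map ψ).sum = 0) (x y : α) : G.count x = G.count y := by
  have key : ∀ x, (Fintype.card α : ℂ) * G.count x = Multiset.card G := by
    intro x
    calc (Fintype.card α : ℂ) * G.count x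
        = (G.map fun y => ∑ ψ : AddChar α ℂ, ψ (y - x)).sum := by
          simp_rw [AddChar.sum_apply_eq_ite, sub_eq_zero]
          rw [Multiset.sum_map_eq_nsmul_single x (fun y hy _ => if_neg hy), if_pos rfl,
            nsmul_eq_mul, mul_comm]
      _ = ∑ ψ : AddChar α ℂ, ψ (-x) * (G.map ψ).sum := by
          simp_rw [Finset.sum_eq_multiset_sum]
          rw [Multiset.sum_map_sum_map]
          congr 1
          refine Multiset.map_congr rfl fun ψ _ => ?_
          simp_rw [sub_eq_add_neg, AddChar.map_add_eq_mul, Multiset.sum_map_mul_right, mul_comm]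
      _ = Multiset.card G := by
          rw [Fintype.sum_eq_single 0 fun ψ hψ => by rw [hG ψ hψ, mul_zero]]
          simp
  exact_mod_cast mul_left_cancel₀ (by simp) ((key x).trans (key y).symm)

theorem sum_map_AS_addChar {m n : ℕ} {R : Type*} [CommSemiring R] (ψ : AddChar (ZMod m) R)
    (a : ZMod m) (d : Fin n → ZMod m) (s : ℕ) :
    ((AS m n a d s).map ψ).sum = ψ a * simplexSum n s fun k => ψ (d k) := by
  rw [AS, Multiset.map_map, ← Finset.sum_eq_multiset_sum, simplexSum, mul_sum]
  refine sum_congr rfl fun i _ => ?_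
  simp only [Function.comp_apply, AddChar.map_add_eq_mul, AddChar.map_sum_eq_prod, ← nsmul_eq_mul,
    AddChar.map_nsmul_eq_pow]

theorem isBalanced_AS {M n : ℕ} [NeZero M] (a : ZMod M) {d : Fin n → ZMod M}
    (hd : ∀ k, IsUnit (d k)) (hdiff : ∀ j k : Fin n, j < k → IsUnit (d k - d j))
    {s t : ℕ} (ht : t < n) (hst : (s : ZMod M) = -t) : IsBalanced (AS M n a d s) := by
  refine Multiset.count_eq_count_of_sum_map_addChar_eq_zero fun ψ hψ => ?_
  have hne : ∀ {u}, IsUnit u → ψ u ≠ 1 := AddChar.apply_ne_one_of_isUnit hψ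
  have hinj : Function.Injective fun k => ψ (d k) := .of_lt_imp_ne fun j k hjk h => by
    refine hne (hdiff j k hjk) ?_
    rw [AddChar.map_sub_eq_div, ← h, div_self (AddChar.val_isUnit ψ _).ne_zero]
  have hsnoc : Function.Injective (Fin.snoc (fun k => ψ (d k)) 1 : Fin (n + 1) → ℂ) :=
    Fin.snoc_injective_of_injective hinj fun ⟨k, hk⟩ => hne (hd k) hk
  have hdvd : M ∣ s + t :=
    (ZMod.natCast_eq_zero_iff _ _).mp (by push_cast; rw [hst, neg_add_cancel])
  rw [sum_map_AS_addChar, simplexSum_eq_zero_of_pow_eq_one hsnoc (fun k => ψ.apply_pow_eq_one _)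
    ht hdvd, mul_zero]

theorem IsBalanced.map_add_eq {m : ℕ} {G : Multiset (ZMod m)} (hG : IsBalanced G) (c : ZMod m) :
    G.map (· + c) = G := by
  ext y
  rw [← sub_add_cancel y c, Multiset.count_map_eq_count' _ _ (add_left_injective c)]
  exact hG _ _

theorem AS_map_add_addMonoidHom {m m' n : ℕ} (f : ZMod m →+ ZMod m') (b : ZMod m') (a : ZMod m)
    (d : Fin n → ZMod m) (s : ℕ) :
    (AS m n a d s).map (fun x => b + f x) = AS m' n (b + f a) (fun k => f (d k)) s := by
  simp only [AS, Multiset.map_map, Function.comp_def, map_add, map_sum, ← nsmul_eq_mul, map_nsmul,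
    add_assoc]

def mulLift (m₁ m₂ : ℕ) : ZMod m₂ →+ ZMod (m₁ * m₂) :=
  ZMod.lift m₂ ⟨(AddMonoidHom.mulLeft (m₁ : ZMod (m₁ * m₂))).comp (Int.castAddHom _),
    by simp [← Nat.cast_mul]⟩

theorem mulLift_castHom (m₁ m₂ : ℕ) (c : ZMod (m₁ * m₂)) :
    mulLift m₁ m₂ (ZMod.castHom (dvd_mul_left m₂ m₁) (ZMod m₂) c) = m₁ * c := by
  obtain ⟨z, rfl⟩ := ZMod.intCast_surjective c
  simp [mulLift, ZMod.lift_coe]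

theorem mulLift_one (m₁ m₂ : ℕ) : mulLift m₁ m₂ 1 = m₁ := by
  simpa using mulLift_castHom m₁ m₂ 1

theorem stmt18_general (n m₁ m₂ : ℕ) (h₂ : 0 < m₂)
    (a : ZMod (m₁ * m₂)) (d : Fin n → ZMod (m₁ * m₂))
    (hd : ∀ i, IsUnit ((ZMod.castHom (dvd_mul_left m₂ m₁) (ZMod m₂)) (d i)))
    (hdiff : ∀ i j : Fin n, i < j →
      IsUnit ((ZMod.castHom (dvd_mul_left m₂ m₁) (ZMod m₂)) (d j) -
        (ZMod.castHom (dvd_mul_left m₂ m₁) (ZMod m₂)) (d i)))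
    (s : ℕ) (ht : ∃ t < n, (s : ZMod m₂) = -(t : ZMod m₂)) :
    ∀ x : ZMod (m₁ * m₂),
      (AS (m₁ * m₂) n a (fun k => (m₁ : ZMod (m₁ * m₂)) * d k) s).count
          (x + (m₁ : ZMod (m₁ * m₂))) =
        (AS (m₁ * m₂) n a (fun k => (m₁ : ZMod (m₁ * m₂)) * d k) s).count x := by
  have : NeZero m₂ := ⟨h₂.ne'⟩
  obtain ⟨t, htn, hst⟩ := ht
  set Δ := AS (m₁ * m₂) n a (fun k => (m₁ : ZMod (m₁ * m₂)) * d k) s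
  set G := AS m₂ n 0 (fun k => ZMod.castHom (dvd_mul_left m₂ m₁) (ZMod m₂) (d k)) s
  have hΔ : Δ = G.map fun c => a + mulLift m₁ m₂ c := by
    rw [AS_map_add_addMonoidHom]
    simp only [map_zero, add_zero, mulLift_castHom, Δ]
  have hG : IsBalanced G := isBalanced_AS 0 hd hdiff htn hst
  have hshift : Δ.map (· + (m₁ : ZMod (m₁ * m₂))) = Δ := by
    rw [hΔ, Multiset.map_map]
    conv_rhs => rw [← hG.map_add_eq 1, Multiset.map_map]
    congr 1
    funext c
    simp [map_add, mulLift_one, add_assoc]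
  intro x
  conv_lhs => rw [← hshift]
  exact Multiset.count_map_eq_count' _ _ (add_left_injective _) x

/-- Key lemma: with `m = m₁ m₂`, `gcd(m₂, n!) = 1`, projections mod `m₂` of the `dᵢ` and of
their differences invertible, and `s ≡ −t (mod m₂)` with `t ∈ [0, n−1]`, the multiplicity
function of `Δ = AS(a, m₁ d, s)` in `ZMod (m₁ m₂)` satisfies `m_Δ(x + m₁) = m_Δ(x)`. -/
theorem stmt18 (n m₁ m₂ : ℕ) (hn : 2 ≤ n) (h₁ : 0 < m₁) (h₂ : 0 < m₂)
    (hgcd : Nat.gcd m₂ n.factorial = 1)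
    (a : ZMod (m₁ * m₂)) (d : Fin n → ZMod (m₁ * m₂))
    (hd : ∀ i, IsUnit ((ZMod.castHom (dvd_mul_left m₂ m₁) (ZMod m₂)) (d i)))
    (hdiff : ∀ i j : Fin n, i < j →
      IsUnit ((ZMod.castHom (dvd_mul_left m₂ m₁) (ZMod m₂)) (d j) -
        (ZMod.castHom (dvd_mul_left m₂ m₁) (ZMod m₂)) (d i)))
    (s : ℕ) (hs : 0 < s) (ht : ∃ t < n, (s : ZMod m₂) = -(t : ZMod m₂)) :
    ∀ x : ZMod (m₁ * m₂),
      (AS (m₁ * m₂) n a (fun k => (m₁ : ZMod (m₁ * m₂)) * d k) s).count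
          (x + (m₁ : ZMod (m₁ * m₂))) =
        (AS (m₁ * m₂) n a (fun k => (m₁ : ZMod (m₁ * m₂)) * d k) s).count x :=
  stmt18_general n m₁ m₂ h₂ a d hd hdiff s ht
end
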